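/- arXiv:2208.00307 — 5 statements merged into one kernel-verified Lean document; each statement's English description precedes it below -/
import Mathlib

section
/- Let H, U, Y be complex Hilbert spaces and A : H → H, B : U → H, C : H → Y bounded linear operators such that (A,C) is exponentially detectable. Then there exists a constant M > 0 such that for every T > 0, every u ∈ L²([0,T],U) and every x₀ ∈ H, the mild solution x(t) = exp(tA)x₀ + ∫₀ᵗ exp((t−s)A) B u(s) ds satisfies ‖x(T)‖² ≤ M ( ∫₀^T (‖C x(t)‖² + ‖u(t)‖²) dt + ‖x₀‖² ). -/
/-!
With `P = A + L C` exponentially stable, a mild solution `x` of `ẋ = A x + B u` is also the mild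
solution of `ẋ = P x + (B u - L C x)` from the same initial state. This rests on the Duhamel
identity `∫ᵣᵀ exp((T-s)P) L C exp((s-r)A) ds = exp((T-r)P) - exp((T-r)A)` together with a change
of the order of integration over the triangle `0 ≤ r ≤ s ≤ T`. In the new formula every term is
damped by `‖exp(tP)‖ ≤ m e^{-ωt}`, so Cauchy–Schwarz against `∫₀ᵀ e^{-2ω(T-s)} ds ≤ 1/(2ω)` bounds
`‖x(T)‖²` by `‖x₀‖²` and the `L²` norms of `u` and `C x`, uniformly in `T`.
-/

open MeasureTheory ContinuousLinearMap
open scoped InnerProductSpace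

noncomputable section

variable {H U Y : Type*}
  [NormedAddCommGroup H] [InnerProductSpace ℂ H] [CompleteSpace H]
  [NormedAddCommGroup U] [InnerProductSpace ℂ U] [CompleteSpace U]
  [NormedAddCommGroup Y] [InnerProductSpace ℂ Y] [CompleteSpace Y]

/-- A bounded operator `G` generates an exponentially stable (uniformly continuous)
semigroup `t ↦ exp (t • G)`. -/
def ExpStable (G : H →L[ℂ] H) : Prop :=
  ∃ m > 0, ∃ ω > 0, ∀ t : ℝ, 0 ≤ t →
    ‖NormedSpace.exp (t • G)‖ ≤ m * Real.exp (-ω * t)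

/-- Mild solution of `ẋ = A x + B u`, `x 0 = x₀`:
`x t = exp (t A) x₀ + ∫₀ᵗ exp ((t - s) A) (B (u s)) ds`. -/
def mildSol (A : H →L[ℂ] H) (B : U →L[ℂ] H) (u : ℝ → U) (x₀ : H) (t : ℝ) : H :=
  NormedSpace.exp (t • A) x₀ +
    ∫ s in (0:ℝ)..t, NormedSpace.exp ((t - s) • A) (B (u s))

/-- Generalized linear-quadratic running cost
`ℓ(x,u) = ‖Cx‖² + ‖Ku‖² + 2 Re⟨z,x⟩ + 2 Re⟨v,u⟩`. -/
def runCost (C : H →L[ℂ] Y) (K : U →L[ℂ] U) (z : H) (v : U) (x : H) (u : U) : ℝ :=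
  ‖C x‖ ^ 2 + ‖K u‖ ^ 2 + 2 * (⟪z, x⟫_ℂ).re + 2 * (⟪v, u⟫_ℂ).re

/-- The cost functional `J_T(u) = ∫₀ᵀ ℓ(x(t), u(t)) dt` along the mild solution
with initial state `x₀`. -/
def costJ (A : H →L[ℂ] H) (B : U →L[ℂ] H) (C : H →L[ℂ] Y) (K : U →L[ℂ] U)
    (z : H) (v : U) (T : ℝ) (x₀ : H) (u : ℝ → U) : ℝ :=
  ∫ t in (0:ℝ)..T, runCost C K z v (mildSol A B u x₀ t) (u t)

open NormedSpace Set

section BanachAlgebra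

variable {𝔸 : Type*} [NormedRing 𝔸] [NormedAlgebra ℝ 𝔸] [CompleteSpace 𝔸]

theorem continuous_exp_smul (P : 𝔸) : Continuous fun t : ℝ => exp (t • P) :=
  (differentiable_exp_smul_const ℝ P).continuous

-- `exp_add_of_commute` would need `NormedAlgebra ℚ 𝔸`, which `E →L[ℂ] E` does not carry.
theorem exp_add_smul (P : 𝔸) (s t : ℝ) : exp ((s + t) • P) = exp (s • P) * exp (t • P) := by
  rw [add_smul]
  refine exp_add_of_commute_of_mem_ball (𝕂 := ℝ) ((Commute.refl P).smul_left s |>.smul_right t)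
    ?_ ?_ <;> simp [expSeries_radius_eq_top]

theorem integral_exp_smul_add_mul_mul_exp_smul (Q K : 𝔸) (r T : ℝ) :
    ∫ s in r..T, exp ((T - s) • (Q + K)) * K * exp ((s - r) • Q) =
      exp ((T - r) • (Q + K)) - exp ((T - r) • Q) := by
  have hderiv : ∀ s ∈ uIcc r T,
      HasDerivAt (fun s : ℝ => exp ((T - s) • (Q + K)) * exp ((s - r) • Q))
        (-(exp ((T - s) • (Q + K)) * K * exp ((s - r) • Q))) s := by
    intro s _
    have hP : HasDerivAt (fun s : ℝ => exp ((T - s) • (Q + K)))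
        (-(exp ((T - s) • (Q + K)) * (Q + K))) s := by
      simpa only [Function.comp_def, neg_smul, one_smul] using
        (hasDerivAt_exp_smul_const (Q + K) (T - s)).scomp s ((hasDerivAt_id s).const_sub T)
    have hQ : HasDerivAt (fun s : ℝ => exp ((s - r) • Q)) (Q * exp ((s - r) • Q)) s := by
      simpa only [Function.comp_def, one_smul, id] using
        (hasDerivAt_exp_smul_const' Q (s - r)).scomp s ((hasDerivAt_id s).sub_const r)
    refine (hP.mul hQ).congr_deriv ?_
    generalize exp ((T - s) • (Q + K)) = a
    generalize exp ((s - r) • Q) = b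
    noncomm_ring
  have hcont : Continuous fun s : ℝ => exp ((T - s) • (Q + K)) * K * exp ((s - r) • Q) :=
    (((continuous_exp_smul _).comp (continuous_const.sub continuous_id)).mul continuous_const).mul
      ((continuous_exp_smul Q).comp (continuous_id.sub continuous_const))
  have hFTC := intervalIntegral.integral_eq_sub_of_hasDerivAt hderiv
    (hcont.neg.intervalIntegrable _ _)
  rw [intervalIntegral.integral_neg] at hFTC
  simp only [sub_self, zero_smul, exp_zero, one_mul, mul_one] at hFTC
  rw [← neg_sub, ← hFTC, neg_neg]

end BanachAlgebra

section CompactDomain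

variable {X 𝕜 E F : Type*} [TopologicalSpace X] [MeasurableSpace X] [OpensMeasurableSpace X]
  [T2Space X] [NontriviallyNormedField 𝕜] [NormedAddCommGroup E] [NormedSpace 𝕜 E]
  [NormedAddCommGroup F] [NormedSpace 𝕜 F] {μ : Measure X} {K : Set X}

theorem MeasureTheory.IntegrableOn.continuousOn_clm_apply
    [SecondCountableTopologyEither X (E →L[𝕜] F)] {Φ : X → E →L[𝕜] F} {f : X → E}
    (hK : IsCompact K) (hΦ : ContinuousOn Φ K) (hf : IntegrableOn f K μ) :
    IntegrableOn (fun x => Φ x (f x)) K μ := by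
  obtain ⟨C, hC⟩ := hK.exists_bound_of_continuousOn hΦ
  exact (ContinuousLinearMap.id 𝕜 (E →L[𝕜] F)).integrable_of_bilin_of_bdd_left C
    (hΦ.aestronglyMeasurable hK.measurableSet) (ae_restrict_of_forall_mem hK.measurableSet hC) hf

theorem MeasureTheory.IntegrableOn.intervalIntegrable_clm_apply {Φ : ℝ → E →L[𝕜] F} {f : ℝ → E}
    {a b t : ℝ} (hf : IntegrableOn f (Icc a b)) (hΦ : Continuous Φ) (ht : t ∈ Icc a b) :
    IntervalIntegrable (fun s => Φ s (f s)) volume a t := by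
  refine ((hf.continuousOn_clm_apply isCompact_Icc hΦ.continuousOn).mono_set
    ?_).intervalIntegrable
  rw [uIcc_of_le ht.1]
  exact Icc_subset_Icc_right ht.2

theorem ContinuousOn.memLp_restrict [SecondCountableTopologyEither X E]
    [IsFiniteMeasureOnCompacts μ] {f : X → E} (hK : IsCompact K) (hf : ContinuousOn f K)
    (p : ENNReal) : MemLp f p (μ.restrict K) := by
  have : IsFiniteMeasure (μ.restrict K) := isFiniteMeasure_restrict.2 hK.measure_lt_top.ne
  obtain ⟨C, hC⟩ := hK.exists_bound_of_continuousOn hf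
  exact MemLp.of_bound (hf.aestronglyMeasurable hK.measurableSet) C
    (ae_restrict_of_forall_mem hK.measurableSet hC)

end CompactDomain

theorem MeasureTheory.MemLp.intervalIntegrable_norm_sq {E : Type*} [NormedAddCommGroup E]
    {v : ℝ → E} {a b : ℝ} (hab : a ≤ b) (hv : MemLp v 2 (volume.restrict (Icc a b))) :
    IntervalIntegrable (fun s => ‖v s‖ ^ 2) volume a b := by
  rw [intervalIntegrable_iff_integrableOn_Icc_of_le hab]
  exact (memLp_two_iff_integrable_sq_norm hv.1).1 hv

theorem intervalIntegral_integral_swap_triangle {E : Type*} [NormedAddCommGroup E]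
    [NormedSpace ℝ E] [CompleteSpace E] {T : ℝ} (hT : 0 ≤ T) {F : ℝ → ℝ → E}
    (hF : IntegrableOn (Function.uncurry F) (Icc 0 T ×ˢ Icc 0 T)) :
    ∫ s in (0:ℝ)..T, ∫ r in (0:ℝ)..s, F s r = ∫ r in (0:ℝ)..T, ∫ s in r..T, F s r := by
  set μ := volume.restrict (Icc (0:ℝ) T)
  let G : ℝ × ℝ → E := {p | p.2 ≤ p.1}.indicator (Function.uncurry F)
  have hG : Integrable G (μ.prod μ) := by
    rw [Measure.prod_restrict, ← Measure.volume_eq_prod]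
    exact hF.indicator (measurableSet_le measurable_snd measurable_fst)
  have hL : ∫ s in (0:ℝ)..T, ∫ r in (0:ℝ)..s, F s r = ∫ s, ∫ r, G (s, r) ∂μ ∂μ := by
    rw [intervalIntegral.integral_of_le hT, ← integral_Icc_eq_integral_Ioc]
    refine setIntegral_congr_fun measurableSet_Icc fun s hs => ?_
    have hIcc : Iic s ∩ Icc 0 T = Icc 0 s := by
      ext r; simp only [mem_inter_iff, mem_Iic, mem_Icc]; grind
    have hGs : (fun r => G (s, r)) = (Iic s).indicator (F s) := by
      ext r; simp [G, indicator_apply]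
    rw [hGs, integral_indicator measurableSet_Iic, Measure.restrict_restrict measurableSet_Iic,
      hIcc, intervalIntegral.integral_of_le hs.1, integral_Icc_eq_integral_Ioc]
  have hR : ∫ r in (0:ℝ)..T, ∫ s in r..T, F s r = ∫ r, ∫ s, G (s, r) ∂μ ∂μ := by
    rw [intervalIntegral.integral_of_le hT, ← integral_Icc_eq_integral_Ioc]
    refine setIntegral_congr_fun measurableSet_Icc fun r hr => ?_
    have hIcc : Ici r ∩ Icc 0 T = Icc r T := by
      ext s; simp only [mem_inter_iff, mem_Ici, mem_Icc]; grind
    have hGr : (fun s => G (s, r)) = (Ici r).indicator (fun s => F s r) := by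
      ext s; simp [G, indicator_apply]
    rw [hGr, integral_indicator measurableSet_Ici, Measure.restrict_restrict measurableSet_Ici,
      hIcc, intervalIntegral.integral_of_le hr.2, integral_Icc_eq_integral_Ioc]
  rw [hL, hR]
  exact integral_integral_swap (f := fun s r => G (s, r)) hG

theorem sq_integral_mul_le_integral_sq_mul_integral_sq {α : Type*} [MeasurableSpace α]
    {μ : Measure α} {f g : α → ℝ} (hf0 : 0 ≤ᵐ[μ] f) (hg0 : 0 ≤ᵐ[μ] g) (hf : MemLp f 2 μ)
    (hg : MemLp g 2 μ) :
    (∫ a, f a * g a ∂μ) ^ 2 ≤ (∫ a, f a ^ 2 ∂μ) * ∫ a, g a ^ 2 ∂μ := by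
  have hHolder := integral_mul_le_Lp_mul_Lq_of_nonneg Real.HolderConjugate.two_two hf0 hg0
    (by simpa using hf) (by simpa using hg)
  simp only [Real.rpow_two, ← Real.sqrt_eq_rpow] at hHolder
  have hfg : 0 ≤ ∫ a, f a * g a ∂μ := integral_nonneg_of_ae
    (by filter_upwards [hf0, hg0] with a ha hb using mul_nonneg ha hb)
  calc (∫ a, f a * g a ∂μ) ^ 2 ≤ (√(∫ a, f a ^ 2 ∂μ) * √(∫ a, g a ^ 2 ∂μ)) ^ 2 :=
        pow_le_pow_left₀ hfg hHolder 2
    _ = _ := by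
        rw [mul_pow, Real.sq_sqrt (integral_nonneg fun a => sq_nonneg _),
          Real.sq_sqrt (integral_nonneg fun a => sq_nonneg _)]

theorem integral_exp_neg_mul_sub_sq_le {ω T : ℝ} (hω : 0 < ω) :
    ∫ s in (0:ℝ)..T, Real.exp (-ω * (T - s)) ^ 2 ≤ 1 / (2 * ω) := by
  have hsq : ∀ s, Real.exp (-ω * (T - s)) ^ 2 = Real.exp (2 * ω * (s - T)) := fun s => by
    rw [← Real.exp_nat_mul]; ring_nf
  have hderiv : ∀ s ∈ uIcc 0 T, HasDerivAt (fun s => Real.exp (2 * ω * (s - T)) / (2 * ω))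
      (Real.exp (2 * ω * (s - T))) s := fun s _ =>
    ((((hasDerivAt_id s).sub_const T).const_mul (2 * ω)).exp.div_const (2 * ω)).congr_deriv
      (by field_simp; rfl)
  simp_rw [hsq]
  rw [intervalIntegral.integral_eq_sub_of_hasDerivAt hderiv
    ((by fun_prop : Continuous fun s => Real.exp (2 * ω * (s - T))).intervalIntegrable _ _)]
  have : 0 ≤ Real.exp (2 * ω * (0 - T)) / (2 * ω) := by positivity
  simp only [sub_self, mul_zero, Real.exp_zero]
  linarith

section TwoOperators

variable {𝕜 E F G : Type*} [NontriviallyNormedField 𝕜] [NormedAddCommGroup E] [NormedSpace 𝕜 E]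
  [NormedAddCommGroup F] [NormedSpace 𝕜 F] [NormedAddCommGroup G] [NormedSpace 𝕜 G]
  (B : E →L[𝕜] G) (L : F →L[𝕜] G)

theorem sq_norm_apply_sub_apply_le (v : E) (w : F) :
    ‖B v - L w‖ ^ 2 ≤ 2 * (‖B‖ ^ 2 + ‖L‖ ^ 2) * (‖w‖ ^ 2 + ‖v‖ ^ 2) := by
  calc ‖B v - L w‖ ^ 2 ≤ (‖B‖ * ‖v‖ + ‖L‖ * ‖w‖) ^ 2 :=
        pow_le_pow_left₀ (norm_nonneg _)
          ((norm_sub_le _ _).trans (add_le_add (B.le_opNorm v) (L.le_opNorm w))) 2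
    _ ≤ 2 * ((‖B‖ * ‖v‖) ^ 2 + (‖L‖ * ‖w‖) ^ 2) := add_sq_le
    _ ≤ _ := by nlinarith [sq_nonneg (‖B‖ * ‖w‖), sq_nonneg (‖L‖ * ‖v‖)]

theorem integral_sq_norm_apply_sub_apply_le {v : ℝ → E} {w : ℝ → F} {a b : ℝ} (hab : a ≤ b)
    (hv : MemLp v 2 (volume.restrict (Icc a b))) (hw : MemLp w 2 (volume.restrict (Icc a b))) :
    ∫ s in a..b, ‖B (v s) - L (w s)‖ ^ 2 ≤
      2 * (‖B‖ ^ 2 + ‖L‖ ^ 2) * ∫ s in a..b, (‖w s‖ ^ 2 + ‖v s‖ ^ 2) := by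
  rw [← intervalIntegral.integral_const_mul]
  exact intervalIntegral.integral_mono_on hab
    (((B.comp_memLp' hv).sub (L.comp_memLp' hw)).intervalIntegrable_norm_sq hab)
    (((hw.intervalIntegrable_norm_sq hab).add (hv.intervalIntegrable_norm_sq hab)).const_mul _)
    fun s _ => sq_norm_apply_sub_apply_le B L (v s) (w s)

end TwoOperators

section Duhamel

variable {E : Type*} [NormedAddCommGroup E] [NormedSpace ℂ E] {T : ℝ} {f : ℝ → E}

/-- The mild solution of `ẋ = A x + f`, `x 0 = x₀`. -/
def duhamel (A : E →L[ℂ] E) (x₀ : E) (f : ℝ → E) (t : ℝ) : E :=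
  exp (t • A) x₀ + ∫ s in (0:ℝ)..t, exp ((t - s) • A) (f s)

theorem continuousOn_integral_exp_smul_sub_apply [CompleteSpace E] (A : E →L[ℂ] E)
    (hT : 0 ≤ T) (hf : IntegrableOn f (Icc 0 T)) :
    ContinuousOn (fun t => ∫ s in (0:ℝ)..t, exp ((t - s) • A) (f s)) (Icc 0 T) := by
  have hneg : Continuous fun s : ℝ => exp ((-s) • A) := (continuous_exp_smul A).comp continuous_neg
  have hprim := intervalIntegral.continuousOn_primitive_interval
    (f := fun s => exp ((-s) • A) (f s)) (a := 0) (b := T)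
    (by rw [uIcc_of_le hT]; exact hf.continuousOn_clm_apply isCompact_Icc hneg.continuousOn)
  rw [uIcc_of_le hT] at hprim
  refine ((continuous_exp_smul A).continuousOn.clm_apply hprim).congr fun t ht => ?_
  dsimp only
  rw [← ContinuousLinearMap.intervalIntegral_comp_comm _
    (hf.intervalIntegrable_clm_apply hneg ht)]
  refine intervalIntegral.integral_congr fun s _ => ?_
  rw [sub_eq_add_neg]
  -- `rw [exp_add_smul]` fails: the goal reaches the `ℝ`-action on `E →L[ℂ] E` through a
  -- different (defeq) instance path
  exact congrArg (· (f s)) (exp_add_smul A t (-s))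

theorem continuousOn_duhamel [CompleteSpace E] (A : E →L[ℂ] E) (x₀ : E) (hT : 0 ≤ T)
    (hf : IntegrableOn f (Icc 0 T)) : ContinuousOn (duhamel A x₀ f) (Icc 0 T) :=
  ((continuous_exp_smul A).clm_apply continuous_const).continuousOn.add
    (continuousOn_integral_exp_smul_sub_apply A hT hf)

theorem integral_exp_smul_add_apply_exp_smul_apply [CompleteSpace E] (A K : E →L[ℂ] E) (x₀ : E) :
    ∫ s in (0:ℝ)..T, exp ((T - s) • (A + K)) (K (exp (s • A) x₀)) =
      (exp (T • (A + K)) - exp (T • A)) x₀ := by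
  have hD := integral_exp_smul_add_mul_mul_exp_smul A K 0 T
  simp only [sub_zero] at hD
  have hcont : Continuous fun s : ℝ => exp ((T - s) • (A + K)) * K * exp (s • A) :=
    (((continuous_exp_smul (A + K)).comp (continuous_const.sub continuous_id)).mul
      continuous_const).mul (continuous_exp_smul A)
  calc _ = (∫ s in (0:ℝ)..T, exp ((T - s) • (A + K)) * K * exp (s • A)) x₀ :=
        (ContinuousLinearMap.intervalIntegral_apply (hcont.intervalIntegrable 0 T) x₀).symm
    _ = _ := congrArg (· x₀) hD

theorem integral_exp_smul_add_apply_integral [CompleteSpace E] (A K : E →L[ℂ] E) (hT : 0 ≤ T)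
    (hf : IntegrableOn f (Icc 0 T)) :
    ∫ s in (0:ℝ)..T, exp ((T - s) • (A + K)) (K (∫ r in (0:ℝ)..s, exp ((s - r) • A) (f r))) =
      ∫ r in (0:ℝ)..T, (exp ((T - r) • (A + K)) - exp ((T - r) • A)) (f r) := by
  let Φ : ℝ → ℝ → E →L[ℂ] E := fun s r => exp ((T - s) • (A + K)) * K * exp ((s - r) • A)
  have hP : Continuous fun p : ℝ × ℝ => exp ((T - p.1) • (A + K)) :=
    (continuous_exp_smul (A + K)).comp (continuous_const.sub continuous_fst)
  have hA : Continuous fun p : ℝ × ℝ => exp ((p.1 - p.2) • A) :=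
    (continuous_exp_smul A).comp (continuous_fst.sub continuous_snd)
  have hΦ : Continuous fun p : ℝ × ℝ => Φ p.1 p.2 := (hP.mul continuous_const).mul hA
  have hf_snd : IntegrableOn (fun p : ℝ × ℝ => f p.2) (Icc 0 T ×ˢ Icc 0 T) := by
    rw [IntegrableOn, Measure.volume_eq_prod, ← Measure.prod_restrict]
    exact hf.comp_snd _
  calc _ = ∫ s in (0:ℝ)..T, ∫ r in (0:ℝ)..s, Φ s r (f r) := by
        refine intervalIntegral.integral_congr fun s hs => ?_
        rw [uIcc_of_le hT] at hs
        exact (ContinuousLinearMap.intervalIntegral_comp_comm (exp ((T - s) • (A + K)) * K)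
          (hf.intervalIntegrable_clm_apply (Φ := fun r => exp ((s - r) • A))
            ((continuous_exp_smul A).comp (continuous_const.sub continuous_id)) hs)).symm
    _ = ∫ r in (0:ℝ)..T, ∫ s in r..T, Φ s r (f r) :=
        intervalIntegral_integral_swap_triangle hT
          (hf_snd.continuousOn_clm_apply (isCompact_Icc.prod isCompact_Icc) hΦ.continuousOn)
    _ = _ := by
        refine intervalIntegral.integral_congr fun r _ => ?_
        have hΦr : Continuous fun s => Φ s r := hΦ.comp (continuous_id.prodMk continuous_const)
        rw [← ContinuousLinearMap.intervalIntegral_apply (hΦr.intervalIntegrable _ _)]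
        exact congrArg (· (f r)) (integral_exp_smul_add_mul_mul_exp_smul A K r T)

theorem integral_exp_smul_add_apply_duhamel [CompleteSpace E] (A K : E →L[ℂ] E) (x₀ : E)
    (hT : 0 ≤ T) (hf : IntegrableOn f (Icc 0 T)) :
    ∫ s in (0:ℝ)..T, exp ((T - s) • (A + K)) (K (duhamel A x₀ f s)) =
      duhamel (A + K) x₀ f T - duhamel A x₀ f T := by
  have hP : Continuous fun s : ℝ => exp ((T - s) • (A + K)) :=
    (continuous_exp_smul (A + K)).comp (continuous_const.sub continuous_id)
  have hfree : Continuous fun s => exp ((T - s) • (A + K)) (K (exp (s • A) x₀)) :=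
    hP.clm_apply (K.continuous.comp ((continuous_exp_smul A).clm_apply continuous_const))
  have hforced : ContinuousOn (fun s => exp ((T - s) • (A + K))
      (K (∫ r in (0:ℝ)..s, exp ((s - r) • A) (f r)))) (uIcc 0 T) := by
    rw [uIcc_of_le hT]
    exact hP.continuousOn.clm_apply (K.continuous.comp_continuousOn
      (continuousOn_integral_exp_smul_sub_apply A hT hf))
  have hT' : T ∈ Icc 0 T := right_mem_Icc.2 hT
  calc _ = ∫ s in (0:ℝ)..T, (exp ((T - s) • (A + K)) (K (exp (s • A) x₀)) +
        exp ((T - s) • (A + K)) (K (∫ r in (0:ℝ)..s, exp ((s - r) • A) (f r)))) := by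
        simp only [duhamel, map_add]
    _ = (exp (T • (A + K)) - exp (T • A)) x₀ +
        ∫ r in (0:ℝ)..T, (exp ((T - r) • (A + K)) - exp ((T - r) • A)) (f r) := by
        rw [intervalIntegral.integral_add (hfree.intervalIntegrable _ _)
          hforced.intervalIntegrable, integral_exp_smul_add_apply_exp_smul_apply,
          integral_exp_smul_add_apply_integral A K hT hf]
    _ = _ := by
        simp only [sub_apply]
        rw [intervalIntegral.integral_sub (hf.intervalIntegrable_clm_apply hP hT')
          (hf.intervalIntegrable_clm_apply (Φ := fun r => exp ((T - r) • A))
            ((continuous_exp_smul A).comp (continuous_const.sub continuous_id)) hT')]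
        simp only [duhamel]
        abel

theorem duhamel_eq_duhamel_add [CompleteSpace E] (A K : E →L[ℂ] E) (x₀ : E) (hT : 0 ≤ T)
    (hf : IntegrableOn f (Icc 0 T)) :
    duhamel A x₀ f T = duhamel (A + K) x₀ (fun s => f s - K (duhamel A x₀ f s)) T := by
  have hP : Continuous fun s : ℝ => exp ((T - s) • (A + K)) :=
    (continuous_exp_smul (A + K)).comp (continuous_const.sub continuous_id)
  have hKx : ContinuousOn (fun s => exp ((T - s) • (A + K)) (K (duhamel A x₀ f s)))
      (uIcc 0 T) := by
    rw [uIcc_of_le hT]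
    exact hP.continuousOn.clm_apply
      (K.continuous.comp_continuousOn (continuousOn_duhamel A x₀ hT hf))
  calc duhamel A x₀ f T = duhamel (A + K) x₀ f T -
        ∫ s in (0:ℝ)..T, exp ((T - s) • (A + K)) (K (duhamel A x₀ f s)) := by
        rw [integral_exp_smul_add_apply_duhamel A K x₀ hT hf]; abel
    _ = _ := by
        have hKx' := hKx.intervalIntegrable (μ := volume)
        simp only [duhamel, map_sub] at hKx' ⊢
        rw [intervalIntegral.integral_sub
          (hf.intervalIntegrable_clm_apply hP (right_mem_Icc.2 hT)) hKx']
        abel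

theorem sq_norm_integral_exp_smul_apply_le {P : E →L[ℂ] E} {m ω : ℝ} (hω : 0 < ω)
    (hP : ∀ t : ℝ, 0 ≤ t → ‖exp (t • P)‖ ≤ m * Real.exp (-ω * t)) (hT : 0 ≤ T) {g : ℝ → E}
    (hg : MemLp g 2 (volume.restrict (Icc 0 T))) :
    ‖∫ s in (0:ℝ)..T, exp ((T - s) • P) (g s)‖ ^ 2 ≤
      m ^ 2 / (2 * ω) * ∫ s in (0:ℝ)..T, ‖g s‖ ^ 2 := by
  have hμ : volume.restrict (Ioc 0 T) ≤ volume.restrict (Icc (0:ℝ) T) :=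
    Measure.restrict_mono Ioc_subset_Icc_self le_rfl
  set k : ℝ → ℝ := fun s => Real.exp (-ω * (T - s))
  have hk : MemLp k 2 (volume.restrict (Ioc 0 T)) :=
    ((Continuous.continuousOn (by fun_prop)).memLp_restrict isCompact_Icc 2).mono_measure hμ
  have hgn : MemLp (fun s => ‖g s‖) 2 (volume.restrict (Ioc 0 T)) := hg.norm.mono_measure hμ
  have hnorm : ‖∫ s in (0:ℝ)..T, exp ((T - s) • P) (g s)‖ ≤
      m * ∫ s in (0:ℝ)..T, k s * ‖g s‖ := by
    rw [← intervalIntegral.integral_const_mul]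
    refine intervalIntegral.norm_integral_le_of_norm_le hT (ae_of_all _ fun s hs => ?_) ?_
    · calc ‖exp ((T - s) • P) (g s)‖ ≤ ‖exp ((T - s) • P)‖ * ‖g s‖ := le_opNorm _ _
        _ ≤ m * k s * ‖g s‖ :=
            mul_le_mul_of_nonneg_right (hP _ (by linarith [hs.2])) (norm_nonneg _)
        _ = m * (k s * ‖g s‖) := mul_assoc _ _ _
    · exact ((intervalIntegrable_iff_integrableOn_Ioc_of_le hT).2
        (hk.integrable_mul hgn)).const_mul m
  have hCS : (∫ s in (0:ℝ)..T, k s * ‖g s‖) ^ 2 ≤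
      (∫ s in (0:ℝ)..T, k s ^ 2) * ∫ s in (0:ℝ)..T, ‖g s‖ ^ 2 := by
    simp only [intervalIntegral.integral_of_le hT]
    exact sq_integral_mul_le_integral_sq_mul_integral_sq
      (ae_of_all _ fun s => (Real.exp_pos _).le) (ae_of_all _ fun s => norm_nonneg _) hk hgn
  calc ‖∫ s in (0:ℝ)..T, exp ((T - s) • P) (g s)‖ ^ 2
      ≤ m ^ 2 * (∫ s in (0:ℝ)..T, k s * ‖g s‖) ^ 2 := by
        rw [← mul_pow]; exact pow_le_pow_left₀ (norm_nonneg _) hnorm 2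
    _ ≤ m ^ 2 * ((∫ s in (0:ℝ)..T, k s ^ 2) * ∫ s in (0:ℝ)..T, ‖g s‖ ^ 2) := by gcongr
    _ ≤ m ^ 2 * (1 / (2 * ω) * ∫ s in (0:ℝ)..T, ‖g s‖ ^ 2) := by
        gcongr
        · exact intervalIntegral.integral_nonneg hT fun s _ => sq_nonneg _
        · exact integral_exp_neg_mul_sub_sq_le hω
    _ = _ := by ring

theorem sq_norm_duhamel_le {P : E →L[ℂ] E} {m ω : ℝ} (hω : 0 < ω)
    (hP : ∀ t : ℝ, 0 ≤ t → ‖exp (t • P)‖ ≤ m * Real.exp (-ω * t)) (hT : 0 ≤ T) (x₀ : E)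
    {g : ℝ → E} (hg : MemLp g 2 (volume.restrict (Icc 0 T))) :
    ‖duhamel P x₀ g T‖ ^ 2 ≤ 2 * m ^ 2 * ‖x₀‖ ^ 2 + m ^ 2 / ω * ∫ s in (0:ℝ)..T, ‖g s‖ ^ 2 := by
  have hfree : ‖exp (T • P) x₀‖ ^ 2 ≤ m ^ 2 * ‖x₀‖ ^ 2 := by
    have hdecay : Real.exp (-ω * T) ^ 2 ≤ 1 :=
      pow_le_one₀ (Real.exp_pos _).le (Real.exp_le_one_iff.2 (by nlinarith))
    calc ‖exp (T • P) x₀‖ ^ 2 ≤ (m * Real.exp (-ω * T) * ‖x₀‖) ^ 2 :=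
          pow_le_pow_left₀ (norm_nonneg _)
            ((le_opNorm _ _).trans (mul_le_mul_of_nonneg_right (hP T hT) (norm_nonneg _))) 2
      _ = m ^ 2 * ‖x₀‖ ^ 2 * Real.exp (-ω * T) ^ 2 := by ring
      _ ≤ m ^ 2 * ‖x₀‖ ^ 2 := mul_le_of_le_one_right (by positivity) hdecay
  calc ‖duhamel P x₀ g T‖ ^ 2
      ≤ (‖exp (T • P) x₀‖ + ‖∫ s in (0:ℝ)..T, exp ((T - s) • P) (g s)‖) ^ 2 :=
        pow_le_pow_left₀ (norm_nonneg _) (norm_add_le _ _) 2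
    _ ≤ 2 * (‖exp (T • P) x₀‖ ^ 2 + ‖∫ s in (0:ℝ)..T, exp ((T - s) • P) (g s)‖ ^ 2) := add_sq_le
    _ ≤ 2 * (m ^ 2 * ‖x₀‖ ^ 2 + m ^ 2 / (2 * ω) * ∫ s in (0:ℝ)..T, ‖g s‖ ^ 2) := by
        gcongr; exact sq_norm_integral_exp_smul_apply_le hω hP hT hg
    _ = _ := by field_simp

end Duhamel

/-- the final-state estimate following from exponential detectability of
`(A, C)`: `‖x(T)‖² ≤ M (∫₀ᵀ (‖Cx(t)‖² + ‖u(t)‖²) dt + ‖x₀‖²)` along mild solutions. -/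
theorem detectability_estimate
    (A : H →L[ℂ] H) (B : U →L[ℂ] H) (C : H →L[ℂ] Y)
    (hdet : ∃ L : Y →L[ℂ] H, ExpStable (A + L ∘L C)) :
    ∃ M > 0, ∀ T > 0, ∀ u : ℝ → U, ∀ x₀ : H,
      MemLp u 2 (volume.restrict (Set.Icc 0 T)) →
      ‖mildSol A B u x₀ T‖ ^ 2 ≤
        M * ((∫ t in (0:ℝ)..T, (‖C (mildSol A B u x₀ t)‖ ^ 2 + ‖u t‖ ^ 2)) + ‖x₀‖ ^ 2) := by
  obtain ⟨L, m, hm, ω, hω, hstable⟩ := hdet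
  refine ⟨2 * m ^ 2 * (1 + (‖B‖ ^ 2 + ‖L‖ ^ 2) / ω), by positivity, fun T hT u x₀ hu => ?_⟩
  set x := mildSol A B u x₀
  set J := ∫ t in (0:ℝ)..T, (‖C (x t)‖ ^ 2 + ‖u t‖ ^ 2)
  have hBu : IntegrableOn (fun s => B (u s)) (Icc 0 T) :=
    B.integrable_comp (hu.integrable one_le_two)
  have hCx : MemLp (fun s => C (x s)) 2 (volume.restrict (Icc 0 T)) :=
    (C.continuous.comp_continuousOn (continuousOn_duhamel A x₀ hT.le hBu)).memLp_restrict
      isCompact_Icc 2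
  have hJ : 0 ≤ J := intervalIntegral.integral_nonneg hT.le fun s _ => by positivity
  have hx : x T = duhamel (A + L ∘L C) x₀ (fun s => B (u s) - (L ∘L C) (x s)) T :=
    duhamel_eq_duhamel_add A (L ∘L C) x₀ hT.le hBu
  calc ‖x T‖ ^ 2 ≤ 2 * m ^ 2 * ‖x₀‖ ^ 2 + m ^ 2 / ω * (2 * (‖B‖ ^ 2 + ‖L‖ ^ 2) * J) := by
        rw [hx]
        refine (sq_norm_duhamel_le hω hstable hT.le x₀
          ((B.comp_memLp' hu).sub (L.comp_memLp' hCx))).trans ?_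
        gcongr
        exact integral_sq_norm_apply_sub_apply_le B L hT.le hu hCx
    _ ≤ _ := by
        have : 0 ≤ m ^ 2 * (‖B‖ ^ 2 + ‖L‖ ^ 2) / ω * ‖x₀‖ ^ 2 := by positivity
        have : 0 ≤ m ^ 2 * J := by positivity
        field_simp
        nlinarith
end
end

section
/- Let H and U be complex Hilbert spaces and A : H → H, B : U → H bounded linear operators such that (A,B) is exponentially stabilizable. Then the range of the continuous linear map [A B] : H × U → H, (x,u) ↦ Ax + Bu, is a closed subspace of H. -/
open MeasureTheory ContinuousLinearMap
open scoped InnerProductSpace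

noncomputable section

variable {H U Y : Type*}
  [NormedAddCommGroup H] [InnerProductSpace ℂ H] [CompleteSpace H]
  [NormedAddCommGroup U] [InnerProductSpace ℂ U] [CompleteSpace U]
  [NormedAddCommGroup Y] [InnerProductSpace ℂ Y] [CompleteSpace Y]

/-! If `G = A + B F` were not invertible, then `0 ∈ σ(G)`, so `1 = exp 0 ∈ σ(exp (t G))` and
`1 ≤ ‖exp (t G)‖` for every `t`, contradicting exponential decay. Hence `G` is surjective, and
every `y = G x = A x + B (F x)` lies in the range of `[A B]`, which is therefore all of `H`. -/

section BanachAlgebra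

variable {𝔸 : Type*} [NormedRing 𝔸] [CompleteSpace 𝔸] [NormOneClass 𝔸]

theorem one_le_norm_exp_of_not_isUnit (𝕜 : Type*) [RCLike 𝕜] [NormedAlgebra 𝕜 𝔸] {a : 𝔸}
    (ha : ¬IsUnit a) : 1 ≤ ‖NormedSpace.exp a‖ := by
  simpa using spectrum.norm_le_norm_of_mem
    (spectrum.exp_mem_exp (𝕜 := 𝕜) a (spectrum.zero_mem (R := 𝕜) ha))

theorem isUnit_of_norm_exp_smul_lt_one {𝕜 : Type*} [RCLike 𝕜] [NormedAlgebra 𝕜 𝔸] {a : 𝔸}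
    {t : 𝕜} (h : ‖NormedSpace.exp (t • a)‖ < 1) : IsUnit a := by
  by_contra ha
  rcases eq_or_ne t 0 with rfl | ht
  · simp at h
  · have hta : ¬IsUnit (t • a) := fun hta => ha ((isUnit_smul_iff (Units.mk0 t ht) a).1 hta)
    exact (one_le_norm_exp_of_not_isUnit 𝕜 hta).not_gt h

end BanachAlgebra

theorem ContinuousLinearMap.surjective_coprod_of_surjective_add_comp {R M N : Type*}
    [Semiring R] [TopologicalSpace M] [AddCommMonoid M] [Module R M] [ContinuousAdd M]
    [TopologicalSpace N] [AddCommMonoid N] [Module R N] {A : M →L[R] M} {B : N →L[R] M}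
    (F : M →L[R] N) (h : Function.Surjective (A + B ∘L F)) :
    Function.Surjective (A.coprod B) := fun y =>
  let ⟨x, hx⟩ := h y
  ⟨(x, F x), by simpa using hx⟩

theorem ExpStable.exists_norm_exp_smul_lt_one {G : H →L[ℂ] H} (hG : ExpStable G) :
    ∃ t : ℝ, ‖NormedSpace.exp (t • G)‖ < 1 := by
  obtain ⟨m, -, ω, hω, hbound⟩ := hG
  have hdecay : Filter.Tendsto (fun t : ℝ => m * Real.exp (-ω * t)) Filter.atTop (nhds 0) := by
    simpa using (Real.tendsto_exp_atBot.comp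
      (Filter.tendsto_id.const_mul_atTop_of_neg (neg_neg_iff_pos.2 hω))).const_mul m
  obtain ⟨t, ht, hlt⟩ :=
    ((Filter.eventually_ge_atTop 0).and (hdecay.eventually (gt_mem_nhds one_pos))).exists
  exact ⟨t, (hbound t ht).trans_lt hlt⟩

theorem ExpStable.isUnit {G : H →L[ℂ] H} (hG : ExpStable G) : IsUnit G := by
  cases subsingleton_or_nontrivial H
  · exact isUnit_of_subsingleton G
  · obtain ⟨t, ht⟩ := hG.exists_norm_exp_smul_lt_one
    exact isUnit_of_norm_exp_smul_lt_one ht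

/-- closed range test: if `(A, B)` is exponentially stabilizable, then the
range of `[A B] : H × U → H`, `(x, u) ↦ A x + B u`, is closed. -/
theorem closed_range_test
    (A : H →L[ℂ] H) (B : U →L[ℂ] H)
    (hstab : ∃ F : H →L[ℂ] U, ExpStable (A + B ∘L F)) :
    IsClosed (Set.range (A.coprod B)) := by
  obtain ⟨F, hF⟩ := hstab
  have hsurj : Function.Surjective (A.coprod B) :=
    surjective_coprod_of_surjective_add_comp F (isUnit_iff_bijective.1 hF.isUnit).2
  rw [hsurj.range_eq]
  exact isClosed_univ
end
end

section
/- Let H, U be complex Hilbert spaces, A : H → H and B : U → H bounded linear operators, P : [0,∞) → L(H) a map of bounded operators, and P_min ∈ L(H). Assume A − BB*P_min is exponentially stable and there exist M₀, μ > 0 with ‖P(t) − P_min‖ ≤ M₀ e^{−μt} for all t ≥ 0. Then there exist constants M, k > 0, independent of T, τ, such that for every 0 ≤ τ ≤ t ≤ T and every differentiable function x : [τ,T] → H satisfying x′(s) = (A − B B* P(T−s)) x(s) for all s ∈ [τ,T], one has ‖x(t)‖ ≤ M e^{−k(t−τ)} ‖x(τ)‖ (exponential decay of the evolution operator U_T(t,τ)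 of the closed-loop nonautonomous system). -/
open MeasureTheory ContinuousLinearMap
open scoped InnerProductSpace

noncomputable section

variable {H U Y : Type*}
  [NormedAddCommGroup H] [InnerProductSpace ℂ H] [CompleteSpace H]
  [NormedAddCommGroup U] [InnerProductSpace ℂ U] [CompleteSpace U]
  [NormedAddCommGroup Y] [InnerProductSpace ℂ Y] [CompleteSpace Y]

/-! Write `A - B B* P(T - s) = G + D(s)` with `G = A - B B* P_min` exponentially stable and
`‖D(s)‖ ≤ c e^{-μ(T - s)}`. By variation of constants, `φ(s) = e^{ω(s - τ)} ‖x(s)‖` satisfies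
`φ(t) ≤ m ‖x(τ)‖ + ∫_τ^t m ‖D(s)‖ φ(s) ds`, so Grönwall's inequality gives
`φ(t) ≤ m ‖x(τ)‖ exp (m ∫_τ^t ‖D‖) ≤ m ‖x(τ)‖ e^{m c / μ}`: the perturbation has total mass at
most `c / μ` on every interval ending before `T`, whatever `T` and `τ` are. -/

open Set intervalIntegral

theorem hasDerivAt_integral_of_continuousOn_Icc {F : Type*} [NormedAddCommGroup F]
    [NormedSpace ℝ F] [CompleteSpace F] {f : ℝ → F} {a b t : ℝ}
    (hf : ContinuousOn f (Icc a b)) (ht : t ∈ Ioo a b) :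
    HasDerivAt (fun u => ∫ s in a..u, f s) (f t) t :=
  integral_hasDerivAt_right
    ((hf.mono (Icc_subset_Icc_right ht.2.le)).intervalIntegrable_of_Icc ht.1.le)
    (hf.mono Ioo_subset_Icc_self |>.stronglyMeasurableAtFilter isOpen_Ioo t ht)
    (hf.continuousAt (Icc_mem_nhds ht.1 ht.2))

theorem continuousOn_integral_of_continuousOn_Icc {F : Type*} [NormedAddCommGroup F]
    [NormedSpace ℝ F] {f : ℝ → F} {a b : ℝ} (hab : a ≤ b)
    (hf : ContinuousOn f (Icc a b)) :
    ContinuousOn (fun u => ∫ s in a..u, f s) (Icc a b) := by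
  rw [← uIcc_of_le hab] at hf ⊢
  exact continuousOn_primitive_interval (hf.integrableOn_compact isCompact_uIcc)

/-- Grönwall's inequality in integral form. -/
theorem le_mul_exp_integral_of_le_add_integral {φ h : ℝ → ℝ} {a b c : ℝ}
    (hφ : ContinuousOn φ (Icc a b)) (hh : ContinuousOn h (Icc a b))
    (hh_nonneg : ∀ s ∈ Icc a b, 0 ≤ h s)
    (hle : ∀ t ∈ Icc a b, φ t ≤ c + ∫ s in a..t, h s * φ s) {t : ℝ} (ht : t ∈ Icc a b) :
    φ t ≤ c * Real.exp (∫ s in a..t, h s) := by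
  have hab : a ≤ b := ht.1.trans ht.2
  have hhφ : ContinuousOn (fun s => h s * φ s) (Icc a b) := hh.mul hφ
  set Ψ : ℝ → ℝ := fun u => c + ∫ s in a..u, h s * φ s
  set Φ : ℝ → ℝ := fun u => ∫ s in a..u, h s
  -- `Ψ · exp (-Φ)` is antitone since its derivative is `h exp (-Φ) (φ - Ψ) ≤ 0`.
  have hanti : AntitoneOn (fun u => Ψ u * Real.exp (-Φ u)) (Icc a b) := by
    have hderiv : ∀ u ∈ Ioo a b, HasDerivAt (fun u => Ψ u * Real.exp (-Φ u))
        (h u * Real.exp (-Φ u) * (φ u - Ψ u)) u := fun u hu =>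
      (((hasDerivAt_integral_of_continuousOn_Icc hhφ hu).const_add c).mul
        (hasDerivAt_integral_of_continuousOn_Icc hh hu).neg.exp).congr_deriv
        (by simp only [Ψ, Φ, Pi.neg_apply]; ring)
    refine antitoneOn_of_deriv_nonpos (convex_Icc a b)
      (((continuousOn_integral_of_continuousOn_Icc hab hhφ).const_add c).mul
        (continuousOn_integral_of_continuousOn_Icc hab hh).neg.rexp)
      (fun u hu => ?_) (fun u hu => ?_) <;> rw [interior_Icc] at hu
    · exact (hderiv u hu).differentiableAt.differentiableWithinAt
    · rw [(hderiv u hu).deriv]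
      exact mul_nonpos_of_nonneg_of_nonpos
        (mul_nonneg (hh_nonneg u (Ioo_subset_Icc_self hu)) (Real.exp_pos _).le)
        (sub_nonpos.2 (hle u (Ioo_subset_Icc_self hu)))
  have hΨ : Ψ t * Real.exp (-Φ t) ≤ c := by
    simpa [Ψ, Φ] using hanti (left_mem_Icc.2 hab) ht ht.1
  calc φ t ≤ Ψ t := hle t ht
    _ = Ψ t * Real.exp (-Φ t) * Real.exp (Φ t) := by
      rw [mul_assoc, ← Real.exp_add, neg_add_cancel, Real.exp_zero, mul_one]
    _ ≤ c * Real.exp (Φ t) := by gcongr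

theorem integral_exp_neg_mul_sub_le {μ τ t T : ℝ} (hμ : 0 < μ) (htT : t ≤ T) :
    ∫ s in τ..t, Real.exp (-μ * (T - s)) ≤ 1 / μ := by
  have hderiv : ∀ s ∈ uIcc τ t,
      HasDerivAt (fun r => Real.exp (-μ * (T - r)) / μ) (Real.exp (-μ * (T - s))) s := by
    intro s _
    refine (((hasDerivAt_id' s).const_sub T).const_mul (-μ)).exp.div_const μ |>.congr_deriv ?_
    field_simp
  rw [integral_eq_sub_of_hasDerivAt hderiv (Continuous.intervalIntegrable (by fun_prop) _ _)]
  have hexp : Real.exp (-μ * (T - t)) ≤ 1 := Real.exp_le_one_iff.2 (by nlinarith)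
  rw [div_sub_div_same]
  gcongr
  linarith [Real.exp_pos (-μ * (T - τ))]

variable {E : Type*} [NormedAddCommGroup E] [NormedSpace ℂ E] [CompleteSpace E]

theorem hasDerivAt_exp_sub_smul_apply (G : E →L[ℂ] E) {x : ℝ → E} {x' : E} {t s : ℝ}
    (hx : HasDerivAt x x' s) :
    HasDerivAt (fun r => NormedSpace.exp ((t - r) • G) (x r))
      (NormedSpace.exp ((t - s) • G) (x' - G (x s))) s := by
  have hexp : HasDerivAt (fun r : ℝ => NormedSpace.exp ((t - r) • G))
      (-(NormedSpace.exp ((t - s) • G) * G)) s :=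
    ((hasDerivAt_exp_smul_const G (t - s)).scomp s
      ((hasDerivAt_id s).const_sub t)).congr_deriv (by simp)
  -- the product rule for `r ↦ L r (x r)` is stated for `ℝ`-linear operator families
  have hexpℝ : HasDerivAt (fun r : ℝ => (NormedSpace.exp ((t - r) • G)).restrictScalars ℝ)
      ((-(NormedSpace.exp ((t - s) • G) * G)).restrictScalars ℝ) s :=
    (restrictScalarsL ℂ E E ℝ ℝ).hasFDerivAt.comp_hasDerivAt s hexp
  refine (hexpℝ.clm_apply hx).congr_deriv ?_
  change -NormedSpace.exp ((t - s) • G) (G (x s)) + NormedSpace.exp ((t - s) • G) x' = _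
  rw [map_sub]
  abel

/-- Variation of constants, in the form of an estimate. -/
theorem norm_le_norm_exp_smul_apply_add_integral (G : E →L[ℂ] E) (D : ℝ → E →L[ℂ] E)
    {x : ℝ → E} {g : ℝ → ℝ} {τ t : ℝ} (hτt : τ ≤ t)
    (hx : ∀ s ∈ Icc τ t, HasDerivAt x (G (x s) + D s (x s)) s)
    (hg : IntervalIntegrable g volume τ t)
    (hbound : ∀ s ∈ Ioo τ t, ‖NormedSpace.exp ((t - s) • G) (D s (x s))‖ ≤ g s) :
    ‖x t‖ ≤ ‖NormedSpace.exp ((t - τ) • G) (x τ)‖ + ∫ s in τ..t, g s := by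
  set y : ℝ → E := fun r => NormedSpace.exp ((t - r) • G) (x r)
  have hy : ∀ s ∈ Icc τ t, HasDerivAt y (NormedSpace.exp ((t - s) • G) (D s (x s))) s :=
    fun s hs => by simpa using hasDerivAt_exp_sub_smul_apply G (t := t) (hx s hs)
  have hyt : y t = x t := by simp [y]
  calc ‖x t‖ ≤ ‖y τ‖ + ‖y t - y τ‖ := hyt ▸ norm_le_insert' (y t) (y τ)
    _ ≤ ‖y τ‖ + ∫ s in τ..t, g s := by
      gcongr
      refine norm_sub_le_integral_of_norm_deriv_le_of_le hτt
        (fun s hs => (hy s hs).continuousAt.continuousWithinAt)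
        (fun s hs => (hy s (Ioo_subset_Icc_self hs)).differentiableAt.differentiableWithinAt)
        (Filter.Eventually.of_forall fun s hs => ?_) hg
      rw [(hy s (Ioo_subset_Icc_self hs)).deriv]
      exact hbound s hs

section PerturbedStableSystem

variable (G : E →L[ℂ] E) (D : ℝ → E →L[ℂ] E) {x : ℝ → E} {m ω : ℝ} {τ t : ℝ}

theorem exp_mul_norm_le_add_integral {δ : ℝ → ℝ} (hτt : τ ≤ t)
    (hG : ∀ r : ℝ, 0 ≤ r → ‖NormedSpace.exp (r • G)‖ ≤ m * Real.exp (-ω * r))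
    (hδ : ContinuousOn δ (Icc τ t)) (hD : ∀ s ∈ Icc τ t, ‖D s‖ ≤ δ s)
    (hx : ∀ s ∈ Icc τ t, HasDerivAt x (G (x s) + D s (x s)) s) :
    Real.exp (ω * (t - τ)) * ‖x t‖ ≤
      m * ‖x τ‖ + ∫ s in τ..t, m * δ s * (Real.exp (ω * (s - τ)) * ‖x s‖) := by
  have hm : 0 ≤ m := by simpa using (norm_nonneg _).trans (hG 0 le_rfl)
  have hxc : ContinuousOn x (Icc τ t) := fun s hs => (hx s hs).continuousAt.continuousWithinAt
  have hint : IntervalIntegrable (fun s => m * δ s * (Real.exp (ω * (s - τ)) * ‖x s‖))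
      volume τ t :=
    ContinuousOn.intervalIntegrable_of_Icc hτt (by fun_prop)
  have hfree :
      ‖NormedSpace.exp ((t - τ) • G) (x τ)‖ ≤ Real.exp (-ω * (t - τ)) * (m * ‖x τ‖) := by
    refine le_of_opNorm_le _ (hG _ (sub_nonneg.2 hτt)) _ |>.trans_eq ?_
    ring
  have hforced : ∀ s ∈ Ioo τ t, ‖NormedSpace.exp ((t - s) • G) (D s (x s))‖ ≤
      Real.exp (-ω * (t - τ)) * (m * δ s * (Real.exp (ω * (s - τ)) * ‖x s‖)) := by
    intro s hs
    calc ‖NormedSpace.exp ((t - s) • G) (D s (x s))‖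
        ≤ m * Real.exp (-ω * (t - s)) * (δ s * ‖x s‖) :=
          le_of_opNorm_le _ (hG _ (sub_nonneg.2 hs.2.le)) _ |>.trans
            (by gcongr; exact le_of_opNorm_le _ (hD s (Ioo_subset_Icc_self hs)) _)
      _ = _ := by
          rw [show -ω * (t - s) = -ω * (t - τ) + ω * (s - τ) by ring, Real.exp_add]
          ring
  have hdecay := norm_le_norm_exp_smul_apply_add_integral G D hτt hx (hint.const_mul _) hforced
  rw [intervalIntegral.integral_const_mul] at hdecay
  calc Real.exp (ω * (t - τ)) * ‖x t‖
      ≤ Real.exp (ω * (t - τ)) * (Real.exp (-ω * (t - τ)) * (m * ‖x τ‖ +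
          ∫ s in τ..t, m * δ s * (Real.exp (ω * (s - τ)) * ‖x s‖))) := by
        gcongr
        linarith
    _ = _ := by rw [← mul_assoc, ← Real.exp_add, show ω * (t - τ) + -ω * (t - τ) = 0 by ring,
          Real.exp_zero, one_mul]

theorem norm_le_mul_exp_integral_mul_exp {δ : ℝ → ℝ} (hτt : τ ≤ t)
    (hG : ∀ r : ℝ, 0 ≤ r → ‖NormedSpace.exp (r • G)‖ ≤ m * Real.exp (-ω * r))
    (hδ : ContinuousOn δ (Icc τ t)) (hD : ∀ s ∈ Icc τ t, ‖D s‖ ≤ δ s)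
    (hx : ∀ s ∈ Icc τ t, HasDerivAt x (G (x s) + D s (x s)) s) :
    ‖x t‖ ≤ m * Real.exp (m * ∫ s in τ..t, δ s) * Real.exp (-ω * (t - τ)) * ‖x τ‖ := by
  have hm : 0 ≤ m := by simpa using (norm_nonneg _).trans (hG 0 le_rfl)
  have hxc : ContinuousOn x (Icc τ t) := fun s hs => (hx s hs).continuousAt.continuousWithinAt
  have hgronwall := le_mul_exp_integral_of_le_add_integral
    (φ := fun s => Real.exp (ω * (s - τ)) * ‖x s‖) (h := fun s => m * δ s) (by fun_prop)
    (continuousOn_const.mul hδ) (fun s hs => mul_nonneg hm ((norm_nonneg _).trans (hD s hs)))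
    (fun u hu => exp_mul_norm_le_add_integral G D hu.1 hG (hδ.mono (Icc_subset_Icc_right hu.2))
      (fun s hs => hD s (Icc_subset_Icc_right hu.2 hs))
      (fun s hs => hx s (Icc_subset_Icc_right hu.2 hs))) (right_mem_Icc.2 hτt)
  rw [intervalIntegral.integral_const_mul] at hgronwall
  calc ‖x t‖ = Real.exp (-ω * (t - τ)) * (Real.exp (ω * (t - τ)) * ‖x t‖) := by
        rw [← mul_assoc, ← Real.exp_add, show -ω * (t - τ) + ω * (t - τ) = 0 by ring,
          Real.exp_zero, one_mul]
    _ ≤ Real.exp (-ω * (t - τ)) * (m * ‖x τ‖ * Real.exp (m * ∫ s in τ..t, δ s)) := by gcongr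
    _ = _ := by ring

theorem norm_le_of_norm_perturbation_le_exp {c μ T : ℝ} (hμ : 0 < μ) (hτt : τ ≤ t)
    (htT : t ≤ T)
    (hG : ∀ r : ℝ, 0 ≤ r → ‖NormedSpace.exp (r • G)‖ ≤ m * Real.exp (-ω * r))
    (hD : ∀ s ∈ Icc τ t, ‖D s‖ ≤ c * Real.exp (-μ * (T - s)))
    (hx : ∀ s ∈ Icc τ t, HasDerivAt x (G (x s) + D s (x s)) s) :
    ‖x t‖ ≤ m * Real.exp (m * c / μ) * Real.exp (-ω * (t - τ)) * ‖x τ‖ := by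
  have hm : 0 ≤ m := by simpa using (norm_nonneg _).trans (hG 0 le_rfl)
  have hc : 0 ≤ c := nonneg_of_mul_nonneg_left
    ((norm_nonneg _).trans (hD τ (left_mem_Icc.2 hτt))) (Real.exp_pos _)
  refine (norm_le_mul_exp_integral_mul_exp G D hτt hG (by fun_prop) hD hx).trans ?_
  gcongr
  rw [intervalIntegral.integral_const_mul, mul_div_assoc, div_eq_mul_one_div c]
  gcongr
  exact integral_exp_neg_mul_sub_le hμ htT

end PerturbedStableSystem

/-- exponential decay, uniformly in `T` and `τ`, of solutions of the
closed-loop nonautonomous system `x′(s) = (A − B B* P(T − s)) x(s)`, assuming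
`A − B B* P_min` is exponentially stable and `‖P(t) − P_min‖ ≤ M₀ e^{−μ t}`. -/
theorem closed_loop_evolution_decay
    (A : H →L[ℂ] H) (B : U →L[ℂ] H) (P : ℝ → (H →L[ℂ] H)) (Pmin : H →L[ℂ] H)
    (hstabmin : ExpStable (A - B ∘L (adjoint B) ∘L Pmin))
    (hconv : ∃ M₀ > 0, ∃ μ > 0, ∀ t : ℝ, 0 ≤ t →
      ‖P t - Pmin‖ ≤ M₀ * Real.exp (-μ * t)) :
    ∃ M > 0, ∃ k > 0, ∀ T τ t : ℝ, 0 ≤ τ → τ ≤ t → t ≤ T →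
      ∀ x : ℝ → H,
        (∀ s ∈ Set.Icc τ T, HasDerivAt x ((A - B ∘L (adjoint B) ∘L (P (T - s))) (x s)) s) →
        ‖x t‖ ≤ M * Real.exp (-k * (t - τ)) * ‖x τ‖ := by
  obtain ⟨m, hm, ω, hω, hstab⟩ := hstabmin
  obtain ⟨M₀, -, μ, hμ, hP⟩ := hconv
  refine ⟨m * Real.exp (m * (‖B ∘L adjoint B‖ * M₀) / μ), by positivity, ω, hω, ?_⟩
  intro T τ t _ hτt htT x hx
  refine norm_le_of_norm_perturbation_le_exp _ (fun s => (B ∘L adjoint B) ∘L (Pmin - P (T - s)))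
    hμ hτt htT hstab (fun s hs => ?_) (fun s hs => ?_)
  · calc ‖(B ∘L adjoint B) ∘L (Pmin - P (T - s))‖
          ≤ ‖B ∘L adjoint B‖ * ‖P (T - s) - Pmin‖ := by
          rw [norm_sub_rev]; exact opNorm_comp_le _ _
      _ ≤ ‖B ∘L adjoint B‖ * (M₀ * Real.exp (-μ * (T - s))) := by
          gcongr; exact hP _ (by linarith [hs.2])
      _ = _ := by ring
  · convert hx s ⟨hs.1, hs.2.trans htT⟩ using 1
    simp only [sub_apply, comp_apply, map_sub]
    abel
end
end

section
/- Let H, U, Y be complex Hilbert spaces, A : H → H, B : U → H, C : H → Y bounded linear operators, z ∈ H, v ∈ U, and let T > 0. Let P : [0,T] → L(H) be differentiable in operator norm with P(0) = 0 and P′(t) = A*P(t) + P(t)A − P(t)BB*P(t) + C*C for all t, and let w ∈ H satisfy A*w = z and B*w = v. Then for every u ∈ L²([0,T],U) and x₀ ∈ H, the mild solution x(t) = exp(tA)x₀ + ∫₀ᵗ exp((t−s)A) B u(s) ds satisfies the cost decomposition ∫₀^T (‖Cx(t)‖² + ‖u(t)‖² + 2Re⟨z, x(t)⟩ + 2Re⟨v,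 u(t)⟩) dt = ∫₀^T ‖u(t) + B*P(T−t)x(t)‖² dt + Re⟨P(T)x₀, x₀⟩ + 2Re⟨w, x(T)⟩ − 2Re⟨w, x₀⟩. -/
open MeasureTheory ContinuousLinearMap
open scoped InnerProductSpace

noncomputable section

variable {H U Y : Type*}
  [NormedAddCommGroup H] [InnerProductSpace ℂ H] [CompleteSpace H]
  [NormedAddCommGroup U] [InnerProductSpace ℂ U] [CompleteSpace U]
  [NormedAddCommGroup Y] [InnerProductSpace ℂ Y] [CompleteSpace Y]

/-
Let `x` be the mild solution and `S t = P (T - t)`. Since `A` is bounded,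
`x t = x₀ + ∫₀ᵗ (A x + B u)`, so `x` is absolutely continuous with derivative `A x + B u`, and `S`
is `C¹` with `S' = -Ric(S)`, where `Ric(X) = A* X + X A - X B B* X + C* C`. A product rule for
absolutely continuous functions (proved with Fubini) applies to `ψ t = Re ⟪S t (x t), x t⟫`, which
goes from `Re ⟪P T x₀, x₀⟫` to `0` because `P 0 = 0`, and to `Re ⟪w, x t⟫`. Since `P` and `P*` solve
the same Riccati equation, each `P t` is self-adjoint, and completing the square (with `A* w = z`,
`B* w = v`) gives pointwise
`ℓ(x, u) = ‖u + B* S x‖² - ψ' + 2 Re ⟪w, A x + B u⟫`. Integrating over `[0, T]` gives the claim.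
-/

open Set

section Primitive

variable {E F G : Type*}
  [NormedAddCommGroup E] [NormedSpace ℝ E]
  [NormedAddCommGroup F] [NormedSpace ℝ F]
  [NormedAddCommGroup G] [NormedSpace ℝ G]

lemma integrableOn_bilin_of_continuousOn_right (b : E →L[ℝ] F →L[ℝ] G) {φ : ℝ → E}
    {f : ℝ → F} {T : ℝ} (hφ : IntegrableOn φ (Ioc 0 T)) (hf : ContinuousOn f (Icc 0 T)) :
    IntegrableOn (fun t => b (φ t) (f t)) (Ioc 0 T) := by
  obtain ⟨C, hC⟩ := isCompact_Icc.exists_bound_of_continuousOn hf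
  exact b.integrable_of_bilin_of_bdd_right C hφ
    ((hf.mono Ioc_subset_Icc_self).aestronglyMeasurable measurableSet_Ioc)
    (ae_restrict_of_forall_mem measurableSet_Ioc fun t ht => hC t (Ioc_subset_Icc_self ht))

lemma integrableOn_bilin_of_continuousOn_left (b : E →L[ℝ] F →L[ℝ] G) {f : ℝ → E}
    {ψ : ℝ → F} {T : ℝ} (hf : ContinuousOn f (Icc 0 T)) (hψ : IntegrableOn ψ (Ioc 0 T)) :
    IntegrableOn (fun t => b (f t) (ψ t)) (Ioc 0 T) :=
  integrableOn_bilin_of_continuousOn_right b.flip hψ hf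

lemma setIntegral_prod_bilin_le [CompleteSpace F] [CompleteSpace G] (b : E →L[ℝ] F →L[ℝ] G)
    {φ : ℝ → E} {ψ : ℝ → F} {T : ℝ}
    (hφ : IntegrableOn φ (Ioc 0 T)) (hψ : IntegrableOn ψ (Ioc 0 T)) :
    ∫ p in {p : ℝ × ℝ | p.2 ≤ p.1}, b (φ p.1) (ψ p.2)
        ∂(volume.restrict (Ioc 0 T)).prod (volume.restrict (Ioc 0 T)) =
      ∫ t in Ioc 0 T, b (φ t) (∫ s in Ioc 0 t, ψ s) := by
  have hS : MeasurableSet {p : ℝ × ℝ | p.2 ≤ p.1} := measurableSet_le measurable_snd measurable_fst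
  rw [← MeasureTheory.integral_indicator hS,
    integral_prod _ ((hφ.op_fst_snd (by fun_prop) ⟨‖b‖, b.le_opNorm₂⟩ hψ).indicator hS)]
  refine setIntegral_congr_fun measurableSet_Ioc fun t ht => ?_
  have hslice : ∀ s, {p : ℝ × ℝ | p.2 ≤ p.1}.indicator (fun p => b (φ p.1) (ψ p.2)) (t, s) =
      (Iic t).indicator (fun s => b (φ t) (ψ s)) s := fun s => by
    by_cases h : s ≤ t <;> simp [indicator, h]
  simp_rw [hslice]
  rw [setIntegral_indicator measurableSet_Iic, Ioc_inter_Iic, min_eq_right ht.2,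
    (b (φ t)).integral_comp_comm (hψ.mono_set (Ioc_subset_Ioc_right ht.2))]

lemma setIntegral_prod_bilin_lt [CompleteSpace E] [CompleteSpace G] (b : E →L[ℝ] F →L[ℝ] G)
    {φ : ℝ → E} {ψ : ℝ → F} {T : ℝ}
    (hφ : IntegrableOn φ (Ioc 0 T)) (hψ : IntegrableOn ψ (Ioc 0 T)) :
    ∫ p in {p : ℝ × ℝ | p.1 < p.2}, b (φ p.1) (ψ p.2)
        ∂(volume.restrict (Ioc 0 T)).prod (volume.restrict (Ioc 0 T)) =
      ∫ t in Ioc 0 T, b (∫ s in Ioc 0 t, φ s) (ψ t) := by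
  have hS : MeasurableSet {p : ℝ × ℝ | p.1 < p.2} := measurableSet_lt measurable_fst measurable_snd
  rw [← MeasureTheory.integral_indicator hS,
    integral_prod_symm _ ((hφ.op_fst_snd (by fun_prop) ⟨‖b‖, b.le_opNorm₂⟩ hψ).indicator hS)]
  refine setIntegral_congr_fun measurableSet_Ioc fun t ht => ?_
  have hslice : ∀ s, {p : ℝ × ℝ | p.1 < p.2}.indicator (fun p => b (φ p.1) (ψ p.2)) (s, t) =
      (Iio t).indicator (fun s => b.flip (ψ t) (φ s)) s := fun s => by
    by_cases h : s < t <;> simp [indicator, h]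
  simp_rw [hslice]
  have hIoo : Ioc 0 T ∩ Iio t = Ioo 0 t := by
    ext s
    exact ⟨fun h => ⟨h.1.1, h.2⟩, fun h => ⟨⟨h.1, h.2.le.trans ht.2⟩, h.2⟩⟩
  rw [setIntegral_indicator measurableSet_Iio, hIoo, ← integral_Ioc_eq_integral_Ioo,
    (b.flip (ψ t)).integral_comp_comm (hφ.mono_set (Ioc_subset_Ioc_right ht.2)), flip_apply]

/-- Fubini on the two triangles into which the diagonal cuts `(0, T]²`. -/
theorem bilin_setIntegral_Ioc [CompleteSpace E] [CompleteSpace F] [CompleteSpace G]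
    (b : E →L[ℝ] F →L[ℝ] G) {φ : ℝ → E} {ψ : ℝ → F} {T : ℝ}
    (hφ : IntegrableOn φ (Ioc 0 T)) (hψ : IntegrableOn ψ (Ioc 0 T)) :
    b (∫ t in Ioc 0 T, φ t) (∫ t in Ioc 0 T, ψ t) =
      (∫ t in Ioc 0 T, b (φ t) (∫ s in Ioc 0 t, ψ s)) +
        ∫ t in Ioc 0 T, b (∫ s in Ioc 0 t, φ s) (ψ t) := by
  have hS : MeasurableSet {p : ℝ × ℝ | p.2 ≤ p.1} := measurableSet_le measurable_snd measurable_fst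
  have hSc : {p : ℝ × ℝ | p.2 ≤ p.1}ᶜ = {p | p.1 < p.2} := by ext; simp
  rw [← integral_prod_bilin b hφ hψ,
    ← integral_add_compl hS (hφ.op_fst_snd (by fun_prop) ⟨‖b‖, b.le_opNorm₂⟩ hψ), hSc,
    setIntegral_prod_bilin_le b hφ hψ, setIntegral_prod_bilin_lt b hφ hψ]

/-- `f` is absolutely continuous on `[0, T]` with derivative `f'`, in integral form. -/
structure IsPrimitiveOn (f f' : ℝ → E) (T : ℝ) : Prop where
  integrableOn : IntegrableOn f' (Ioc 0 T)
  eq_add_integral : ∀ t ∈ Icc 0 T, f t = f 0 + ∫ s in (0:ℝ)..t, f' s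

namespace IsPrimitiveOn

variable {f f' : ℝ → E} {g g' : ℝ → F} {T : ℝ}

lemma intervalIntegrable (hf : IsPrimitiveOn f f' T) {t : ℝ} (ht : t ∈ Icc 0 T) :
    IntervalIntegrable f' volume 0 t :=
  (intervalIntegrable_iff_integrableOn_Ioc_of_le ht.1).2
    (hf.integrableOn.mono_set (Ioc_subset_Ioc_right ht.2))

lemma sub_eq_setIntegral (hf : IsPrimitiveOn f f' T) {t : ℝ} (ht : t ∈ Icc 0 T) :
    f t - f 0 = ∫ s in Ioc 0 t, f' s := by
  rw [hf.eq_add_integral t ht, add_sub_cancel_left, intervalIntegral.integral_of_le ht.1]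

lemma integral_eq_sub (hf : IsPrimitiveOn f f' T) (hT : 0 ≤ T) :
    ∫ t in (0:ℝ)..T, f' t = f T - f 0 := by
  rw [hf.eq_add_integral T ⟨hT, le_rfl⟩, add_sub_cancel_left]

lemma mono (hf : IsPrimitiveOn f f' T) {t : ℝ} (ht : t ≤ T) : IsPrimitiveOn f f' t :=
  ⟨hf.integrableOn.mono_set (Ioc_subset_Ioc_right ht),
    fun s hs => hf.eq_add_integral s ⟨hs.1, hs.2.trans ht⟩⟩

lemma continuousOn (hf : IsPrimitiveOn f f' T) : ContinuousOn f (Icc 0 T) := by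
  have h : ContinuousOn (fun t => f 0 + ∫ s in Ioc 0 t, f' s) (Icc 0 T) :=
    continuousOn_const.add (intervalIntegral.continuousOn_primitive
      ((integrableOn_Icc_iff_integrableOn_Ioc (by simp)).2 hf.integrableOn))
  refine h.congr fun t ht => ?_
  rw [hf.eq_add_integral t ht, intervalIntegral.integral_of_le ht.1]

lemma congr (hf : IsPrimitiveOn f f' T) {k k' : ℝ → E} (h : EqOn f k (Icc 0 T))
    (h' : EqOn f' k' (Icc 0 T)) : IsPrimitiveOn k k' T where
  integrableOn := hf.integrableOn.congr_fun (h'.mono Ioc_subset_Icc_self) measurableSet_Ioc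
  eq_add_integral t ht := by
    have h0 : (0:ℝ) ∈ Icc 0 T := ⟨le_rfl, ht.1.trans ht.2⟩
    rw [← h ht, ← h h0, hf.eq_add_integral t ht,
      intervalIntegral.integral_congr (h'.mono (uIcc_subset_Icc h0 ht))]

lemma const_add_integral (c : E) (hf' : IntegrableOn f' (Ioc 0 T)) :
    IsPrimitiveOn (fun t => c + ∫ s in (0:ℝ)..t, f' s) f' T :=
  ⟨hf', fun t _ => by simp⟩

lemma of_hasDerivAt [CompleteSpace E] (hf : ∀ t ∈ Icc 0 T, HasDerivAt f (f' t) t)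
    (hf' : ContinuousOn f' (Icc 0 T)) : IsPrimitiveOn f f' T where
  integrableOn := hf'.integrableOn_Icc.mono_set Ioc_subset_Icc_self
  eq_add_integral t ht := by
    have h0 : (0:ℝ) ∈ Icc 0 T := ⟨le_rfl, ht.1.trans ht.2⟩
    rw [intervalIntegral.integral_eq_sub_of_hasDerivAt
      (fun s hs => hf s (uIcc_subset_Icc h0 ht hs))
      ((hf'.mono (uIcc_subset_Icc h0 ht)).intervalIntegrable), add_sub_cancel]

lemma map [CompleteSpace E] [CompleteSpace F] (hf : IsPrimitiveOn f f' T) (L : E →L[ℝ] F) :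
    IsPrimitiveOn (fun t => L (f t)) (fun t => L (f' t)) T where
  integrableOn := L.integrable_comp hf.integrableOn
  eq_add_integral t ht := by
    rw [hf.eq_add_integral t ht, map_add, L.intervalIntegral_comp_comm (hf.intervalIntegrable ht)]

theorem bilin_apply_eq_add_integral [CompleteSpace E] [CompleteSpace F] [CompleteSpace G]
    (b : E →L[ℝ] F →L[ℝ] G) (hf : IsPrimitiveOn f f' T) (hg : IsPrimitiveOn g g' T)
    (hT : 0 ≤ T) :
    b (f T) (g T) = b (f 0) (g 0) + ∫ t in Ioc 0 T, (b (f' t) (g t) + b (f t) (g' t)) := by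
  have hTT : T ∈ Icc 0 T := ⟨hT, le_rfl⟩
  have hfg' : ∀ t ∈ Ioc 0 T, b (f' t) (∫ s in Ioc 0 t, g' s) = b (f' t) (g t) - b (f' t) (g 0) :=
    fun t ht => by rw [← hg.sub_eq_setIntegral (Ioc_subset_Icc_self ht), map_sub]
  have hf'g : ∀ t ∈ Ioc 0 T, b (∫ s in Ioc 0 t, f' s) (g' t) = b (f t) (g' t) - b (f 0) (g' t) :=
    fun t ht => by rw [← hf.sub_eq_setIntegral (Ioc_subset_Icc_self ht), map_sub, sub_apply]
  have h1 := integrableOn_bilin_of_continuousOn_right b hf.integrableOn hg.continuousOn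
  have h2 := integrableOn_bilin_of_continuousOn_left b hf.continuousOn hg.integrableOn
  have h3 : IntegrableOn (fun t => b (f' t) (g 0)) (Ioc 0 T) :=
    (b.flip (g 0)).integrable_comp hf.integrableOn
  have h4 : IntegrableOn (fun t => b (f 0) (g' t)) (Ioc 0 T) :=
    (b (f 0)).integrable_comp hg.integrableOn
  have hcore := bilin_setIntegral_Ioc b hf.integrableOn hg.integrableOn
  rw [setIntegral_congr_fun measurableSet_Ioc hfg', setIntegral_congr_fun measurableSet_Ioc hf'g,
    integral_sub h1 h3, integral_sub h2 h4, ← hf.sub_eq_setIntegral hTT,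
    ← hg.sub_eq_setIntegral hTT] at hcore
  have h5 : ∫ t in Ioc 0 T, b (f' t) (g 0) = b (f T - f 0) (g 0) := by
    rw [hf.sub_eq_setIntegral hTT]
    exact (b.flip (g 0)).integral_comp_comm hf.integrableOn
  have h6 : ∫ t in Ioc 0 T, b (f 0) (g' t) = b (f 0) (g T - g 0) := by
    rw [hg.sub_eq_setIntegral hTT]
    exact (b (f 0)).integral_comp_comm hg.integrableOn
  rw [h5, h6] at hcore
  simp only [map_sub, sub_apply] at hcore
  rw [integral_add h1 h2]
  linear_combination (norm := module) hcore

theorem bilin [CompleteSpace E] [CompleteSpace F] [CompleteSpace G] (b : E →L[ℝ] F →L[ℝ] G)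
    (hf : IsPrimitiveOn f f' T) (hg : IsPrimitiveOn g g' T) :
    IsPrimitiveOn (fun t => b (f t) (g t)) (fun t => b (f' t) (g t) + b (f t) (g' t)) T where
  integrableOn := (integrableOn_bilin_of_continuousOn_right b hf.integrableOn hg.continuousOn).add
    (integrableOn_bilin_of_continuousOn_left b hf.continuousOn hg.integrableOn)
  eq_add_integral t ht := by
    rw [intervalIntegral.integral_of_le ht.1]
    exact (hf.mono ht.2).bilin_apply_eq_add_integral b (hg.mono ht.2) ht.1

theorem clm_apply [CompleteSpace E] [CompleteSpace F] {𝕜 : Type*} [NontriviallyNormedField 𝕜]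
    [NormedAlgebra ℝ 𝕜] [NormedSpace 𝕜 E] [IsScalarTower ℝ 𝕜 E] [NormedSpace 𝕜 F]
    [IsScalarTower ℝ 𝕜 F] {f f' : ℝ → E →L[𝕜] F} {g g' : ℝ → E}
    (hf : IsPrimitiveOn f f' T) (hg : IsPrimitiveOn g g' T) :
    IsPrimitiveOn (fun t => f t (g t)) (fun t => f' t (g t) + f t (g' t)) T :=
  hf.bilin (restrictScalarsL 𝕜 E F ℝ ℝ) hg

end IsPrimitiveOn

end Primitive

lemma intervalIntegrable_norm_add_sq {E : Type*} [NormedAddCommGroup E] {u f : ℝ → E} {T : ℝ}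
    (hT : 0 ≤ T) (hu : MemLp u 2 (volume.restrict (Icc 0 T))) (hf : ContinuousOn f (Icc 0 T)) :
    IntervalIntegrable (fun t => ‖u t + f t‖ ^ 2) volume 0 T := by
  obtain ⟨M, hM⟩ := isCompact_Icc.exists_bound_of_continuousOn hf
  have hsum := hu.add (MemLp.of_bound (hf.aestronglyMeasurable measurableSet_Icc) M
    (ae_restrict_of_forall_mem measurableSet_Icc hM))
  rw [intervalIntegrable_iff_integrableOn_Icc_of_le hT]
  exact (memLp_two_iff_integrable_sq_norm hsum.1).1 hsum

section Riccati

open scoped NNReal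

variable {R : Type*} [NormedRing R]

lemma lipschitzOnWith_riccati (a b d q : R) (M : ℝ≥0) :
    LipschitzOnWith (‖a‖₊ + ‖b‖₊ + 2 * M * ‖d‖₊) (fun X => a * X + X * b - X * d * X + q)
      (Metric.closedBall 0 M) := by
  refine LipschitzOnWith.of_dist_le_mul fun X hX Y hY => ?_
  rw [mem_closedBall_zero_iff] at hX hY
  have hdiff : a * X + X * b - X * d * X + q - (a * Y + Y * b - Y * d * Y + q) =
      a * (X - Y) + (X - Y) * b - ((X - Y) * d * X + Y * d * (X - Y)) := by noncomm_ring
  rw [dist_eq_norm, dist_eq_norm, hdiff]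
  push_cast
  calc ‖a * (X - Y) + (X - Y) * b - ((X - Y) * d * X + Y * d * (X - Y))‖
      ≤ ‖a‖ * ‖X - Y‖ + ‖X - Y‖ * ‖b‖ + (‖X - Y‖ * ‖d‖ * ‖X‖ + ‖Y‖ * ‖d‖ * ‖X - Y‖) := by
        refine (norm_sub_le _ _).trans (add_le_add ((norm_add_le _ _).trans ?_)
          ((norm_add_le _ _).trans (add_le_add (norm_mul₃_le ..) (norm_mul₃_le ..))))
        exact add_le_add (norm_mul_le _ _) (norm_mul_le _ _)
    _ ≤ ‖a‖ * ‖X - Y‖ + ‖X - Y‖ * ‖b‖ + (‖X - Y‖ * ‖d‖ * M + M * ‖d‖ * ‖X - Y‖) := by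
        gcongr
    _ = (‖a‖ + ‖b‖ + 2 * M * ‖d‖) * ‖X - Y‖ := by ring

/-- `P*` solves the same Riccati equation as `P`, so `P = P*` by uniqueness of solutions. -/
theorem isSelfAdjoint_of_hasDerivAt_riccati [NormedSpace ℝ R] [StarRing R] [NormedStarGroup R]
    [StarModule ℝ R] {a d q : R} (hd : IsSelfAdjoint d) (hq : IsSelfAdjoint q)
    {P : ℝ → R} {T : ℝ} (hP0 : IsSelfAdjoint (P 0))
    (hP : ∀ t ∈ Icc 0 T, HasDerivAt P (star a * P t + P t * a - P t * d * P t + q) t) :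
    ∀ t ∈ Icc 0 T, IsSelfAdjoint (P t) := by
  have hPc : ContinuousOn P (Icc 0 T) := fun t ht => (hP t ht).continuousAt.continuousWithinAt
  obtain ⟨C, hC⟩ := isCompact_Icc.exists_bound_of_continuousOn hPc
  have hPM : ∀ t ∈ Ico 0 T, P t ∈ Metric.closedBall 0 C.toNNReal := fun t ht =>
    mem_closedBall_zero_iff.2 ((hC t (Ico_subset_Icc_self ht)).trans (Real.le_coe_toNNReal C))
  have hstar : ∀ t ∈ Icc 0 T, HasDerivAt (fun s => star (P s))
      (star a * star (P t) + star (P t) * a - star (P t) * d * star (P t) + q) t := fun t ht => by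
    refine (hP t ht).star.congr_deriv ?_
    simp only [star_add, star_sub, star_mul, star_star, hd.star_eq, hq.star_eq, mul_assoc]
    abel
  have huniq := ODE_solution_unique_of_mem_Icc_right
    (fun t _ => lipschitzOnWith_riccati (star a) a d q C.toNNReal) hPc
    (fun t ht => (hP t (Ico_subset_Icc_self ht)).hasDerivWithinAt) hPM
    (continuous_star.comp_continuousOn hPc)
    (fun t ht => (hstar t (Ico_subset_Icc_self ht)).hasDerivWithinAt)
    (fun t ht => by
      simpa only [mem_closedBall_zero_iff, Function.comp_apply, norm_star] using hPM t ht)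
    hP0.star_eq.symm
  exact fun t ht => (huniq ht).symm

end Riccati

section Control

def reInner {E : Type*} [NormedAddCommGroup E] [InnerProductSpace ℂ E] : E →L[ℝ] E →L[ℝ] ℝ :=
  letI := InnerProductSpace.rclikeToReal ℂ E
  innerSL ℝ

lemma reInner_apply {E : Type*} [NormedAddCommGroup E] [InnerProductSpace ℂ E] (x y : E) :
    reInner x y = (⟪x, y⟫_ℂ).re :=
  real_inner_eq_re_inner ℂ x y

def riccati (A : H →L[ℂ] H) (B : U →L[ℂ] H) (C : H →L[ℂ] Y) (X : H →L[ℂ] H) : H →L[ℂ] H :=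
  adjoint A ∘L X + X ∘L A - X ∘L B ∘L adjoint B ∘L X + adjoint C ∘L C

lemma continuous_riccati (A : H →L[ℂ] H) (B : U →L[ℂ] H) (C : H →L[ℂ] Y) :
    Continuous (riccati A B C) := by
  unfold riccati; fun_prop

lemma exp_sub_smul {𝔸 : Type*} [NormedRing 𝔸] [NormedAlgebra ℂ 𝔸] [CompleteSpace 𝔸] (a : 𝔸)
    (t s : ℝ) :
    NormedSpace.exp ((t - s) • a) = NormedSpace.exp (t • a) * NormedSpace.exp ((-s) • a) := by
  -- the lemmas on `exp` are stated for Banach algebras over `ℚ`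
  let : NormedAlgebra ℚ 𝔸 := .restrictScalars ℚ ℂ 𝔸
  rw [sub_eq_add_neg, add_smul,
    NormedSpace.exp_add_of_commute (((Commute.refl a).smul_left t).smul_right (-s))]


theorem isPrimitiveOn_mildSol {V : Type*} [NormedAddCommGroup V] [InnerProductSpace ℂ V]
    (A : H →L[ℂ] H) (B : V →L[ℂ] H) {u : ℝ → V} {T : ℝ}
    (hu : IntegrableOn u (Ioc 0 T)) (x₀ : H) :
    IsPrimitiveOn (mildSol A B u x₀) (fun t => A (mildSol A B u x₀ t) + B (u t)) T := by
  set e : ℝ → H →L[ℂ] H := fun t => NormedSpace.exp (t • A) with he_def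
  have hec : Continuous e :=
    continuous_iff_continuousAt.2 fun t => (hasDerivAt_exp_smul_const A t).continuousAt
  have he : IsPrimitiveOn e (fun t => e t * A) T :=
    .of_hasDerivAt (fun t _ => hasDerivAt_exp_smul_const A t) (by fun_prop)
  have hy : IsPrimitiveOn (fun t => x₀ + ∫ s in (0:ℝ)..t, e (-s) (B (u s))) _ T :=
    .const_add_integral x₀ (integrableOn_bilin_of_continuousOn_left (restrictScalarsL ℂ H H ℝ ℝ)
      (hec.comp continuous_neg).continuousOn (B.integrable_comp hu))
  have hxy : EqOn (fun t => e t (x₀ + ∫ s in (0:ℝ)..t, e (-s) (B (u s)))) (mildSol A B u x₀)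
      (Icc 0 T) := fun t ht => by
    simp only [mildSol, exp_sub_smul, mul_apply_eq_comp]
    rw [map_add, (e t).intervalIntegral_comp_comm (hy.intervalIntegrable ht)]
  refine (he.clm_apply hy).congr hxy fun t ht => ?_
  have hcomm : e t * A = A * e t := (((Commute.refl A).smul_right t).exp_right).eq.symm
  have hinv : e t * e (-t) = 1 := by
    simp only [he_def, ← exp_sub_smul, sub_self, zero_smul, NormedSpace.exp_zero]
  rw [← hxy ht]
  dsimp only
  rw [hcomm, ← mul_apply_eq_comp (e t), hinv, mul_apply_eq_comp, one_apply_eq_self]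

@[simp]
lemma mildSol_zero {V : Type*} [NormedAddCommGroup V] [InnerProductSpace ℂ V]
    (A : H →L[ℂ] H) (B : V →L[ℂ] H) (u : ℝ → V) (x₀ : H) : mildSol A B u x₀ 0 = x₀ := by
  simp [mildSol]

variable {A : H →L[ℂ] H} {B : U →L[ℂ] H} {C : H →L[ℂ] Y} {P : ℝ → H →L[ℂ] H} {T : ℝ}

theorem isSelfAdjoint_of_hasDerivAt_riccati_op (hP0 : IsSelfAdjoint (P 0))
    (hP : ∀ t ∈ Icc 0 T, HasDerivAt P (riccati A B C (P t)) t) :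
    ∀ t ∈ Icc 0 T, IsSelfAdjoint (P t) :=
  isSelfAdjoint_of_hasDerivAt_riccati (a := A) (d := B ∘L adjoint B)
    (by simpa using (isPositive_adjoint_comp_self (adjoint B)).isSelfAdjoint)
    (isPositive_adjoint_comp_self C).isSelfAdjoint hP0 hP

theorem isPrimitiveOn_riccati_comp_sub
    (hP : ∀ t ∈ Icc 0 T, HasDerivAt P (riccati A B C (P t)) t) :
    IsPrimitiveOn (fun t => P (T - t)) (fun t => -riccati A B C (P (T - t))) T := by
  have hmaps : MapsTo (fun t => T - t) (Icc 0 T) (Icc 0 T) := fun t ht =>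
    ⟨sub_nonneg.2 ht.2, sub_le_self T ht.1⟩
  have hPc : ContinuousOn P (Icc 0 T) := fun t ht => (hP t ht).continuousAt.continuousWithinAt
  exact .of_hasDerivAt (fun t ht => (hP (T - t) (hmaps ht)).comp_const_sub T t)
    ((continuous_riccati A B C).comp_continuousOn
      (hPc.comp (continuous_sub_left T).continuousOn hmaps)).neg

/-- The subtracted term is `d/dt Re ⟪S x, x⟫` when `x' = A x + B u` and `S' = -riccati A B C S`. -/
theorem riccati_completion_of_squares {z w : H} {v : U} (hw1 : adjoint A w = z)
    (hw2 : adjoint B w = v) {S : H →L[ℂ] H} (hS : IsSelfAdjoint S) (x : H) (u : U) :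
    ‖C x‖ ^ 2 + ‖u‖ ^ 2 + 2 * (⟪z, x⟫_ℂ).re + 2 * (⟪v, u⟫_ℂ).re =
      ‖u + adjoint B (S x)‖ ^ 2
        - ((⟪-riccati A B C S x + S (A x + B u), x⟫_ℂ).re + (⟪S x, A x + B u⟫_ℂ).re)
        + 2 * (⟪w, A x + B u⟫_ℂ).re := by
  have hre : ∀ p q : H, (⟪p, q⟫_ℂ).re = (⟪q, p⟫_ℂ).re := inner_re_symm (𝕜 := ℂ)
  have hS' : ∀ y, (⟪S y, x⟫_ℂ).re = (⟪S x, y⟫_ℂ).re := fun y => by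
    rw [← adjoint_inner_right, hS.adjoint_eq, hre]
  have hA : (⟪adjoint A (S x), x⟫_ℂ).re = (⟪S x, A x⟫_ℂ).re := by rw [adjoint_inner_left]
  have hB : (⟪S x, B (adjoint B (S x))⟫_ℂ).re = ‖adjoint B (S x)‖ ^ 2 := by
    rw [← adjoint_inner_left]
    exact inner_self_eq_norm_sq (𝕜 := ℂ) _
  have hC : (⟪adjoint C (C x), x⟫_ℂ).re = ‖C x‖ ^ 2 := by
    rw [adjoint_inner_left]
    exact inner_self_eq_norm_sq (𝕜 := ℂ) _
  have hBu : (⟪S x, B u⟫_ℂ).re = (⟪u, adjoint B (S x)⟫_ℂ).re := by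
    rw [← adjoint_inner_left]
    exact inner_re_symm (𝕜 := ℂ) _ _
  have hwA : (⟪w, A x⟫_ℂ).re = (⟪z, x⟫_ℂ).re := by rw [← adjoint_inner_left, hw1]
  have hwB : (⟪w, B u⟫_ℂ).re = (⟪v, u⟫_ℂ).re := by rw [← adjoint_inner_left, hw2]
  have hsq : ‖u + adjoint B (S x)‖ ^ 2 =
      ‖u‖ ^ 2 + 2 * (⟪u, adjoint B (S x)⟫_ℂ).re + ‖adjoint B (S x)‖ ^ 2 :=
    norm_add_sq (𝕜 := ℂ) _ _
  simp only [riccati, add_apply, sub_apply, comp_apply, map_add, inner_add_left, inner_add_right,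
    inner_sub_left, inner_neg_left, Complex.add_re, Complex.sub_re, Complex.neg_re, hS', hA, hB,
    hC, hBu, hwA, hwB, hsq]
  ring

end Control

/-- the cost decomposition (completion of squares) along mild solutions,
using the differential Riccati solution `P` with `P(0) = 0` and the adjoint steady state
vector `w` with `A* w = z`, `B* w = v`. -/
theorem cost_decomposition
    (A : H →L[ℂ] H) (B : U →L[ℂ] H) (C : H →L[ℂ] Y) (z : H) (v : U)
    (T : ℝ) (hT : 0 < T)
    (P : ℝ → (H →L[ℂ] H)) (hP0 : P 0 = 0)
    (hP' : ∀ t ∈ Set.Icc (0:ℝ) T, HasDerivAt P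
      ((adjoint A) ∘L (P t) + (P t) ∘L A - (P t) ∘L B ∘L (adjoint B) ∘L (P t) +
        (adjoint C) ∘L C) t)
    (w : H) (hw1 : adjoint A w = z) (hw2 : adjoint B w = v)
    (u : ℝ → U) (hu : MemLp u 2 (volume.restrict (Set.Icc 0 T))) (x₀ : H) :
    (∫ t in (0:ℝ)..T,
        (‖C (mildSol A B u x₀ t)‖ ^ 2 + ‖u t‖ ^ 2 +
          2 * (⟪z, mildSol A B u x₀ t⟫_ℂ).re + 2 * (⟪v, u t⟫_ℂ).re)) =
      (∫ t in (0:ℝ)..T, ‖u t + adjoint B (P (T - t) (mildSol A B u x₀ t))‖ ^ 2) +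
        (⟪P T x₀, x₀⟫_ℂ).re + 2 * (⟪w, mildSol A B u x₀ T⟫_ℂ).re -
        2 * (⟪w, x₀⟫_ℂ).re := by
  have hTT : T ∈ Icc 0 T := ⟨hT.le, le_rfl⟩
  have hx := isPrimitiveOn_mildSol A B
    (IntegrableOn.mono_set (hu.integrable one_le_two) Ioc_subset_Icc_self) x₀
  have hS := isPrimitiveOn_riccati_comp_sub hP'
  have hsq := intervalIntegrable_norm_add_sq hT.le hu
    ((continuousOn_const (c := adjoint B)).clm_apply
      (hS.continuousOn.clm_apply hx.continuousOn))
  have hψ := (hS.clm_apply hx).bilin reInner hx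
  have hφ := hx.map (reInner w)
  simp only [reInner_apply, neg_apply] at hψ hφ
  have hrev : ∀ t ∈ uIcc 0 T, T - t ∈ Icc 0 T := by
    rw [uIcc_of_le hT.le]
    exact fun t ht => ⟨sub_nonneg.2 ht.2, sub_le_self T ht.1⟩
  have hsa := isSelfAdjoint_of_hasDerivAt_riccati_op (by simp [hP0]) hP'
  rw [intervalIntegral.integral_congr fun t ht => riccati_completion_of_squares hw1 hw2
      (hsa (T - t) (hrev t ht)) (mildSol A B u x₀ t) (u t),
    intervalIntegral.integral_add (hsq.sub (hψ.intervalIntegrable hTT))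
      ((hφ.intervalIntegrable hTT).const_mul 2),
    intervalIntegral.integral_sub hsq (hψ.intervalIntegrable hTT),
    intervalIntegral.integral_const_mul, hψ.integral_eq_sub hT.le, hφ.integral_eq_sub hT.le]
  simp only [sub_self, sub_zero, hP0, mildSol_zero, zero_apply, inner_zero_left, Complex.zero_re]
  ring
end
end

section
/- Let H, U, Y be complex Hilbert spaces, A : H → H, B : U → H, C : H → Y bounded linear operators, z ∈ H, v ∈ U, T > 0. Let P : [0,T] → L(H) be differentiable in operator norm with P(0) = 0 and P′(t) = A*P(t) + P(t)A − P(t)BB*P(t) + C*C, and let w ∈ H satisfy A*w = z, B*w = v. Let z_w : [0,T] → H be the solution of ż_w(t) = (A* − P(t)BB*) z_w(t), z_w(0) = w. Fix x₀ ∈ H, let x* : [0,T] → H solve ẋ*(t) = (A − BB*P(T−t)) x*(t) − BB* z_w(T−t), x*(0) = x₀, and define u*(t) := −B*P(T−t)x*(t) − B* z_w(T−t). Then x* is the mild solution of ẋ = Ax + Bu* with x(0) = x₀, and u* is optimal: J_T(u*) ≤ J_T(u) for every u ∈ L²([0,T],U), where J_T(u) = ∫₀^T (‖Cx(t)‖²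 + ‖u(t)‖² + 2Re⟨z,x(t)⟩ + 2Re⟨v,u(t)⟩) dt with x the mild solution for u with x(0) = x₀. -/
open MeasureTheory ContinuousLinearMap
open scoped InnerProductSpace

noncomputable section

variable {H U Y : Type*}
  [NormedAddCommGroup H] [InnerProductSpace ℂ H] [CompleteSpace H]
  [NormedAddCommGroup U] [InnerProductSpace ℂ U] [CompleteSpace U]
  [NormedAddCommGroup Y] [InnerProductSpace ℂ Y] [CompleteSpace Y]

/-!
Put `p(s) = P(T - s) x*(s) + z_w(T - s) - w`. Differentiating with the Riccati equation and the
equation of `z_w`, the quadratic feedback terms cancel and `p` solves the adjoint equation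
`ṗ = -A* p - (C*C x* + z)`, `p(T) = 0`; hence `p(s) = ∫ₛᵀ e^{(t - s)A*} (C*C x*(t) + z) dt`, and
since `B* w = v` the feedback law reads `B* p = -(u* + v)`.

A competitor `u = u* + d` has state `x* + e`, with `e` the mild solution driven by `d` from `0`, and
`J(u) = J(u*) + ∫ (‖C e‖² + ‖d‖²) + 2 ∫ Re⟨C*C x* + z, e⟩ + 2 ∫ Re⟨u* + v, d⟩`.
Exchanging the order of integration over the triangle `0 ≤ s ≤ t ≤ T` turns the first cross term
into `∫ Re⟨B* p, d⟩`, which cancels the second.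
-/

open Set NormedSpace
open scoped ENNReal

theorem HasDerivAt.complexCLM_apply {E F : Type*} [NormedAddCommGroup E] [NormedSpace ℂ E]
    [NormedAddCommGroup F] [NormedSpace ℂ F]
    {c : ℝ → E →L[ℂ] F} {c' : E →L[ℂ] F} {y : ℝ → E} {y' : E} {t : ℝ}
    (hc : HasDerivAt c c' t) (hy : HasDerivAt y y' t) :
    HasDerivAt (fun s => c s (y s)) (c' (y t) + c t y') t :=
  (((restrictScalarsL ℂ E F ℝ ℝ).hasFDerivAt).comp_hasDerivAt t hc).clm_apply hy

theorem IntervalIntegrable.continuousOn_clm_apply {E F : Type*} [NormedAddCommGroup E]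
    [NormedSpace ℂ E] [NormedAddCommGroup F] [NormedSpace ℂ F] {φ : ℝ → E →L[ℂ] F} {h : ℝ → E}
    {a b : ℝ} (hh : IntervalIntegrable h volume a b) (hφ : ContinuousOn φ (uIcc a b)) :
    IntervalIntegrable (fun s => φ s (h s)) volume a b := by
  rw [intervalIntegrable_iff] at hh ⊢
  obtain ⟨M, hM⟩ := isCompact_uIcc.exists_bound_of_continuousOn hφ
  refine hh.norm.const_mul M |>.mono' ?_ ?_
  · exact isBoundedBilinearMap_apply.continuous.comp_aestronglyMeasurable
      (((hφ.mono uIoc_subset_uIcc).aestronglyMeasurable measurableSet_uIoc).prodMk hh.1)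
  · refine ae_restrict_of_forall_mem measurableSet_uIoc fun s hs => ?_
    exact (φ s).le_of_opNorm_le (hM s (uIoc_subset_uIcc hs)) (h s)

theorem ContinuousOn.memLp_Icc {E : Type*} [NormedAddCommGroup E] {f : ℝ → E} {a b : ℝ}
    (hf : ContinuousOn f (Icc a b)) (p : ℝ≥0∞) : MemLp f p (volume.restrict (Icc a b)) := by
  obtain ⟨M, hM⟩ := isCompact_Icc.exists_bound_of_continuousOn hf
  exact MemLp.of_bound (hf.aestronglyMeasurable measurableSet_Icc) M
    (ae_restrict_of_forall_mem measurableSet_Icc hM)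

theorem intervalIntegral.integral_integral_swap_triangle {E : Type*} [NormedAddCommGroup E]
    [NormedSpace ℝ E] {F : ℝ → ℝ → E} {a b : ℝ} (hab : a ≤ b)
    (hF : Integrable (Function.uncurry F)
      ((volume.restrict (Ioc a b)).prod (volume.restrict (Ioc a b)))) :
    ∫ t in a..b, ∫ s in a..t, F t s = ∫ s in a..b, ∫ t in s..b, F t s := by
  set Φ := {q : ℝ × ℝ | q.2 ≤ q.1}.indicator (Function.uncurry F)
  have hΦ : Integrable Φ _ := hF.indicator (measurableSet_le measurable_snd measurable_fst)
  have hslice_left : ∀ t, (fun s => Φ (t, s)) = (Iic t).indicator (F t) := fun t => by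
    ext s; simp [Φ, indicator_apply]
  have hslice_right : ∀ s, (fun t => Φ (t, s)) = (Ici s).indicator (F · s) := fun s => by
    ext t; simp [Φ, indicator_apply]
  rw [intervalIntegral.integral_of_le hab, intervalIntegral.integral_of_le hab]
  convert integral_integral_swap (f := fun t s => Φ (t, s)) hΦ using 1
  · refine setIntegral_congr_fun measurableSet_Ioc fun t ht => ?_
    rw [hslice_left, setIntegral_indicator measurableSet_Iic, Ioc_inter_Iic, min_eq_right ht.2,
      intervalIntegral.integral_of_le ht.1.le]
  · refine setIntegral_congr_fun measurableSet_Ioc fun s hs => ?_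
    have hset : Ioc a b ∩ Ici s = Icc s b := by
      ext t; simp only [mem_inter_iff, mem_Ioc, mem_Ici, mem_Icc]
      exact ⟨fun h => ⟨h.2, h.1.2⟩, fun h => ⟨⟨hs.1.trans_le h.1, h.2⟩, h.1⟩⟩
    rw [hslice_right, setIntegral_indicator measurableSet_Ici, hset, integral_Icc_eq_integral_Ioc,
      intervalIntegral.integral_of_le hs.2]

section Semigroup

variable {E : Type*} [NormedAddCommGroup E] [NormedSpace ℂ E] [CompleteSpace E] (G : E →L[ℂ] E)

theorem Continuous.exp_smul {X : Type*} [TopologicalSpace X] {φ : X → ℝ} (hφ : Continuous φ) :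
    Continuous fun x => exp (φ x • G) :=
  (continuous_iff_continuousAt.2 fun t => (hasDerivAt_exp_smul_const G t).continuousAt).comp hφ

theorem exp_smul_apply_exp_smul_apply (a b : ℝ) (x : E) :
    exp (a • G) (exp (b • G) x) = exp ((a + b) • G) x := by
  rw [add_smul, exp_add_of_commute_of_mem_ball (𝕂 := ℝ)
    (((Commute.refl G).smul_left a).smul_right b)]
  all_goals simp [expSeries_radius_eq_top]

theorem IntervalIntegrable.exp_smul_sub_apply {h : ℝ → E} {a b : ℝ}
    (hh : IntervalIntegrable h volume a b) (t : ℝ) :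
    IntervalIntegrable (fun s => exp ((t - s) • G) (h s)) volume a b :=
  hh.continuousOn_clm_apply ((continuous_sub_left t).exp_smul G).continuousOn

theorem integral_exp_smul_sub_apply {h : ℝ → E} {a b : ℝ} (hh : IntervalIntegrable h volume a b)
    (t : ℝ) :
    ∫ s in a..b, exp ((t - s) • G) (h s) = exp (t • G) (∫ s in a..b, exp ((-s) • G) (h s)) := by
  have hint : IntervalIntegrable (fun s => exp ((-s) • G) (h s)) volume a b :=
    hh.continuousOn_clm_apply (continuous_neg.exp_smul G).continuousOn
  rw [← ContinuousLinearMap.intervalIntegral_comp_comm _ hint]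
  simp only [exp_smul_apply_exp_smul_apply, sub_eq_add_neg]

theorem eq_exp_smul_apply_add_integral_of_hasDerivAt {y f : ℝ → E} {t : ℝ} (ht : 0 ≤ t)
    (hf : ContinuousOn f (Icc 0 t)) (hy : ∀ s ∈ Icc 0 t, HasDerivAt y (G (y s) + f s) s) :
    y t = exp (t • G) (y 0) + ∫ s in 0..t, exp ((t - s) • G) (f s) := by
  have hderiv : ∀ s ∈ uIcc 0 t,
      HasDerivAt (fun r => exp ((-r) • G) (y r)) (exp ((-s) • G) (f s)) s := by
    intro s hs
    rw [uIcc_of_le ht] at hs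
    have hexp : HasDerivAt (fun r : ℝ => exp ((-r) • G)) ((-1 : ℝ) • (exp ((-s) • G) * G)) s :=
      (hasDerivAt_exp_smul_const G (-s)).scomp s (hasDerivAt_neg s)
    refine (hexp.complexCLM_apply (hy s hs)).congr_deriv ?_
    simp only [neg_smul, one_smul, neg_apply, mul_apply_eq_comp, map_add]
    abel
  have hf' : IntervalIntegrable f volume 0 t := hf.intervalIntegrable_of_Icc ht
  have hint : IntervalIntegrable (fun s => exp ((-s) • G) (f s)) volume 0 t :=
    hf'.continuousOn_clm_apply (continuous_neg.exp_smul G).continuousOn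
  rw [integral_exp_smul_sub_apply G hf' t,
    intervalIntegral.integral_eq_sub_of_hasDerivAt hderiv hint, map_sub,
    exp_smul_apply_exp_smul_apply, exp_smul_apply_exp_smul_apply]
  simp

theorem eq_integral_exp_smul_apply_of_hasDerivAt {p g : ℝ → E} {s T : ℝ} (hsT : s ≤ T)
    (hg : ContinuousOn g (Icc s T)) (hp : ∀ r ∈ Icc s T, HasDerivAt p (-G (p r) - g r) r)
    (hpT : p T = 0) :
    p s = ∫ t in s..T, exp ((t - s) • G) (g t) := by
  have hmem : ∀ r ∈ Icc 0 (T - s), T - r ∈ Icc s T := fun r hr =>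
    ⟨by linarith [hr.2], by linarith [hr.1]⟩
  have hrev := eq_exp_smul_apply_add_integral_of_hasDerivAt G (y := fun r => p (T - r))
    (f := fun r => g (T - r)) (sub_nonneg.2 hsT)
    (hg.comp (continuous_sub_left T).continuousOn hmem)
    (fun r hr => ((hp (T - r) (hmem r hr)).comp_const_sub T r).congr_deriv (by abel))
  simp only [sub_sub_cancel, sub_zero, hpT, map_zero, zero_add] at hrev
  rw [hrev]
  simpa only [sub_right_comm T s, sub_sub_cancel, sub_zero] using
    intervalIntegral.integral_comp_sub_left (fun t => exp ((t - s) • G) (g t))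
      (a := 0) (b := T - s) T

end Semigroup

section Duality

variable (A : H →L[ℂ] H)

theorem re_inner_intervalIntegral_right (x : H) {f : ℝ → H} {a b : ℝ}
    (hf : IntervalIntegrable f volume a b) :
    (⟪x, ∫ s in a..b, f s⟫_ℂ).re = ∫ s in a..b, (⟪x, f s⟫_ℂ).re :=
  ((Complex.reCLM.comp ((innerSL ℂ x).restrictScalars ℝ)).intervalIntegral_comp_comm hf).symm

theorem re_inner_intervalIntegral_left (x : H) {f : ℝ → H} {a b : ℝ}
    (hf : IntervalIntegrable f volume a b) :
    (⟪∫ s in a..b, f s, x⟫_ℂ).re = ∫ s in a..b, (⟪f s, x⟫_ℂ).re := by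
  rw [← inner_conj_symm, Complex.conj_re, re_inner_intervalIntegral_right x hf]
  congr with s
  rw [← inner_conj_symm, Complex.conj_re]

theorem adjoint_exp_smul (r : ℝ) : adjoint (exp (r • A)) = exp (r • adjoint A) := by
  rw [← star_eq_adjoint, star_exp, star_smul, star_trivial, star_eq_adjoint]

theorem integrable_re_inner_exp_smul_apply {g f : ℝ → H} {a b : ℝ}
    (hg : IntegrableOn g (Ioc a b)) (hf : IntegrableOn f (Ioc a b)) :
    Integrable (fun q : ℝ × ℝ => (⟪g q.1, exp ((q.1 - q.2) • A) (f q.2)⟫_ℂ).re)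
      ((volume.restrict (Ioc a b)).prod (volume.restrict (Ioc a b))) := by
  obtain ⟨M, hM⟩ := (isCompact_Icc (a := a - b) (b := b - a)).exists_bound_of_continuousOn
    (continuous_id.exp_smul A).continuousOn
  have hmeas : Continuous fun p : H × (H →L[ℂ] H) × H => (⟪p.1, p.2.1 p.2.2⟫_ℂ).re := by fun_prop
  refine (hg.norm.mul_prod (hf.norm.const_mul M)).mono' ?_ ?_
  · exact hmeas.comp_aestronglyMeasurable (hg.aestronglyMeasurable.comp_fst.prodMk
      (((continuous_fst.sub continuous_snd).exp_smul A).aestronglyMeasurable.prodMk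
        hf.aestronglyMeasurable.comp_snd))
  · rw [Measure.prod_restrict]
    refine ae_restrict_of_forall_mem (measurableSet_Ioc.prod measurableSet_Ioc) ?_
    rintro ⟨t, s⟩ ⟨ht, hs⟩
    have hexp := hM (t - s) ⟨by linarith [ht.1, hs.2], by linarith [ht.2, hs.1]⟩
    calc ‖(⟪g t, exp ((t - s) • A) (f s)⟫_ℂ).re‖ ≤ ‖g t‖ * ‖exp ((t - s) • A) (f s)‖ :=
          (Complex.abs_re_le_norm _).trans (norm_inner_le_norm _ _)
      _ ≤ ‖g t‖ * (M * ‖f s‖) :=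
          mul_le_mul_of_nonneg_left ((exp ((t - s) • A)).le_of_opNorm_le hexp _) (norm_nonneg _)

theorem integral_re_inner_integral_exp_smul_apply {g f : ℝ → H} {T : ℝ} (hT : 0 ≤ T)
    (hg : IntervalIntegrable g volume 0 T) (hf : IntervalIntegrable f volume 0 T) :
    ∫ t in 0..T, (⟪g t, ∫ s in 0..t, exp ((t - s) • A) (f s)⟫_ℂ).re =
      ∫ s in 0..T, (⟪∫ t in s..T, exp ((t - s) • adjoint A) (g t), f s⟫_ℂ).re := by
  calc ∫ t in 0..T, (⟪g t, ∫ s in 0..t, exp ((t - s) • A) (f s)⟫_ℂ).re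
      = ∫ t in 0..T, ∫ s in 0..t, (⟪g t, exp ((t - s) • A) (f s)⟫_ℂ).re := by
        refine intervalIntegral.integral_congr fun t ht => re_inner_intervalIntegral_right _ ?_
        exact (hf.mono_set (uIcc_subset_uIcc left_mem_uIcc ht)).exp_smul_sub_apply A t
    _ = ∫ s in 0..T, ∫ t in s..T, (⟪g t, exp ((t - s) • A) (f s)⟫_ℂ).re :=
        intervalIntegral.integral_integral_swap_triangle hT
          (integrable_re_inner_exp_smul_apply A hg.1 hf.1)
    _ = ∫ s in 0..T, (⟪∫ t in s..T, exp ((t - s) • adjoint A) (g t), f s⟫_ℂ).re := by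
        refine intervalIntegral.integral_congr fun s hs => ?_
        have hint : IntervalIntegrable (fun t => exp ((t - s) • adjoint A) (g t)) volume s T :=
          (hg.mono_set (uIcc_subset_uIcc hs right_mem_uIcc)).continuousOn_clm_apply
            ((continuous_sub_right s).exp_smul _).continuousOn
        rw [re_inner_intervalIntegral_left _ hint]
        simp only [← adjoint_exp_smul, adjoint_inner_left]

end Duality

section MildSolution

variable {V : Type*} [NormedAddCommGroup V] [InnerProductSpace ℂ V] (A : H →L[ℂ] H) (B : V →L[ℂ] H)

theorem mildSol_add {u₁ u₂ : ℝ → V} {t : ℝ} (hu₁ : IntervalIntegrable u₁ volume 0 t)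
    (hu₂ : IntervalIntegrable u₂ volume 0 t) (x₁ x₂ : H) :
    mildSol A B (u₁ + u₂) (x₁ + x₂) t = mildSol A B u₁ x₁ t + mildSol A B u₂ x₂ t := by
  have hB : ∀ {u : ℝ → V}, IntervalIntegrable u volume 0 t →
      IntervalIntegrable (fun s => B (u s)) volume 0 t := fun hu =>
    hu.continuousOn_clm_apply continuousOn_const
  simp only [mildSol, Pi.add_apply, map_add]
  rw [intervalIntegral.integral_add ((hB hu₁).exp_smul_sub_apply A t)
    ((hB hu₂).exp_smul_sub_apply A t)]
  abel

theorem continuousOn_mildSol {u : ℝ → V} {T : ℝ} (hu : IntervalIntegrable u volume 0 T) (x₀ : H) :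
    ContinuousOn (mildSol A B u x₀) (uIcc 0 T) := by
  have hBu : IntervalIntegrable (fun s => B (u s)) volume 0 T :=
    hu.continuousOn_clm_apply continuousOn_const
  have hprim := intervalIntegral.continuousOn_primitive_interval'
    (hBu.continuousOn_clm_apply (continuous_neg.exp_smul A).continuousOn) left_mem_uIcc
  have hexp := continuous_id.exp_smul A
  refine ((hexp.clm_apply (continuous_const (y := x₀))).continuousOn.add
    (hexp.continuousOn.clm_apply hprim)).congr fun t ht => ?_
  simp only [mildSol, id, Pi.add_apply]
  rw [integral_exp_smul_sub_apply A (hBu.mono_set (uIcc_subset_uIcc left_mem_uIcc ht))]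

theorem eq_mildSol_of_hasDerivAt {x : ℝ → H} {u : ℝ → V} {t : ℝ} (ht : 0 ≤ t)
    (hu : ContinuousOn u (Icc 0 t)) (hx : ∀ s ∈ Icc 0 t, HasDerivAt x (A (x s) + B (u s)) s) :
    x t = mildSol A B u (x 0) t :=
  eq_exp_smul_apply_add_integral_of_hasDerivAt A ht (B.continuous.comp_continuousOn hu) hx

end MildSolution

section Optimality

variable (A : H →L[ℂ] H) (B : U →L[ℂ] H) (C : H →L[ℂ] Y) (K : U →L[ℂ] U) (z : H) (v : U)

theorem runCost_add (x e : H) (u d : U) :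
    runCost C K z v (x + e) (u + d) = runCost C K z v x u + (‖C e‖ ^ 2 + ‖K d‖ ^ 2) +
      2 * (⟪adjoint C (C x) + z, e⟫_ℂ).re + 2 * (⟪adjoint K (K u) + v, d⟫_ℂ).re := by
  simp only [runCost, map_add, @norm_add_sq ℂ, inner_add_left, inner_add_right, adjoint_inner_left,
    Complex.add_re, RCLike.re_to_complex]
  ring

theorem integral_re_inner_mildSol_eq_neg {T : ℝ} (hT : 0 ≤ T) {g : ℝ → H}
    (hg : ContinuousOn g (Icc 0 T)) {a d : ℝ → U} (hd : IntervalIntegrable d volume 0 T)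
    (hBg : ∀ s ∈ Icc 0 T, adjoint B (∫ t in s..T, exp ((t - s) • adjoint A) (g t)) = -a s) :
    ∫ t in 0..T, (⟪g t, mildSol A B d 0 t⟫_ℂ).re = -∫ t in 0..T, (⟪a t, d t⟫_ℂ).re := by
  calc ∫ t in 0..T, (⟪g t, mildSol A B d 0 t⟫_ℂ).re
      = ∫ t in 0..T, (⟪g t, ∫ s in 0..t, exp ((t - s) • A) (B (d s))⟫_ℂ).re := by
        simp only [mildSol, map_zero, zero_add]
    _ = ∫ s in 0..T, (⟪∫ t in s..T, exp ((t - s) • adjoint A) (g t), B (d s)⟫_ℂ).re :=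
        integral_re_inner_integral_exp_smul_apply A hT (hg.intervalIntegrable_of_Icc hT)
          (hd.continuousOn_clm_apply continuousOn_const)
    _ = ∫ s in 0..T, -(⟪a s, d s⟫_ℂ).re := intervalIntegral.integral_congr fun s hs => by
        rw [uIcc_of_le hT] at hs
        rw [← adjoint_inner_left, hBg s hs, inner_neg_left, Complex.neg_re]
    _ = -∫ t in 0..T, (⟪a t, d t⟫_ℂ).re := intervalIntegral.integral_neg

theorem costJ_add {T : ℝ} (hT : 0 ≤ T) (x₀ : H) {ustar d : ℝ → U}
    (hustar : ContinuousOn ustar (Icc 0 T)) (hd : MemLp d 2 (volume.restrict (Icc 0 T))) :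
    costJ A B C K z v T x₀ (ustar + d) = costJ A B C K z v T x₀ ustar +
      (∫ t in 0..T, ‖C (mildSol A B d 0 t)‖ ^ 2 + ‖K (d t)‖ ^ 2) +
      2 * (∫ t in 0..T, (⟪adjoint C (C (mildSol A B ustar x₀ t)) + z, mildSol A B d 0 t⟫_ℂ).re) +
      2 * ∫ t in 0..T, (⟪adjoint K (K (ustar t)) + v, d t⟫_ℂ).re := by
  have hus : IntervalIntegrable ustar volume 0 T := hustar.intervalIntegrable_of_Icc hT
  have hd' : IntervalIntegrable d volume 0 T :=
    (intervalIntegrable_iff_integrableOn_Icc_of_le hT).2 (hd.integrable one_le_two)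
  have hx := (continuousOn_mildSol A B hus x₀).mono Icc_subset_uIcc
  have he := (continuousOn_mildSol A B hd' 0).mono Icc_subset_uIcc
  have h₁ : IntervalIntegrable (fun t => runCost C K z v (mildSol A B ustar x₀ t) (ustar t))
      volume 0 T := by
    unfold runCost; exact ContinuousOn.intervalIntegrable_of_Icc hT (by fun_prop)
  have h₂ : IntervalIntegrable (fun t => ‖C (mildSol A B d 0 t)‖ ^ 2 + ‖K (d t)‖ ^ 2) volume 0 T :=
    (ContinuousOn.intervalIntegrable_of_Icc hT (by fun_prop)).add
      ((intervalIntegrable_iff_integrableOn_Icc_of_le hT).2 (K.comp_memLp' hd).norm.integrable_sq)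
  have h₃ : IntervalIntegrable (fun t => 2 *
      (⟪adjoint C (C (mildSol A B ustar x₀ t)) + z, mildSol A B d 0 t⟫_ℂ).re) volume 0 T :=
    ContinuousOn.intervalIntegrable_of_Icc hT (by fun_prop)
  have h₄ : IntervalIntegrable (fun t => (⟪adjoint K (K (ustar t)) + v, d t⟫_ℂ).re) volume 0 T := by
    have h := hd'.continuousOn_clm_apply (φ := fun t => innerSL ℂ (adjoint K (K (ustar t)) + v))
      (by rw [uIcc_of_le hT]; fun_prop)
    exact ⟨h.1.re, h.2.re⟩
  have hsplit : EqOn (fun t => runCost C K z v (mildSol A B (ustar + d) x₀ t) ((ustar + d) t))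
      (fun t => runCost C K z v (mildSol A B ustar x₀ t) (ustar t) +
        (‖C (mildSol A B d 0 t)‖ ^ 2 + ‖K (d t)‖ ^ 2) +
        2 * (⟪adjoint C (C (mildSol A B ustar x₀ t)) + z, mildSol A B d 0 t⟫_ℂ).re +
        2 * (⟪adjoint K (K (ustar t)) + v, d t⟫_ℂ).re) (uIcc 0 T) := fun t ht => by
    have hsub := uIcc_subset_uIcc left_mem_uIcc ht
    have hadd := mildSol_add A B (hus.mono_set hsub) (hd'.mono_set hsub) x₀ 0
    rw [add_zero] at hadd
    dsimp only
    rw [hadd, Pi.add_apply, runCost_add]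
  unfold costJ
  rw [intervalIntegral.integral_congr hsplit, intervalIntegral.integral_add ((h₁.add h₂).add h₃)
    (h₄.const_mul 2), intervalIntegral.integral_add (h₁.add h₂) h₃,
    intervalIntegral.integral_add h₁ h₂, intervalIntegral.integral_const_mul,
    intervalIntegral.integral_const_mul]

theorem costJ_le_of_adjointState {T : ℝ} (hT : 0 ≤ T) (x₀ : H) {ustar : ℝ → U}
    (hustar : ContinuousOn ustar (Icc 0 T))
    (hBp : ∀ s ∈ Icc 0 T, adjoint B (∫ t in s..T,
      exp ((t - s) • adjoint A) (adjoint C (C (mildSol A B ustar x₀ t)) + z)) =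
        -(adjoint K (K (ustar s)) + v))
    {u : ℝ → U} (hu : MemLp u 2 (volume.restrict (Icc 0 T))) :
    costJ A B C K z v T x₀ ustar ≤ costJ A B C K z v T x₀ u := by
  have hd : MemLp (u - ustar) 2 (volume.restrict (Icc 0 T)) := hu.sub (hustar.memLp_Icc 2)
  have hx := (continuousOn_mildSol A B (hustar.intervalIntegrable_of_Icc hT) x₀).mono
    Icc_subset_uIcc
  have hcross := integral_re_inner_mildSol_eq_neg A B hT (by fun_prop)
    ((intervalIntegrable_iff_integrableOn_Icc_of_le hT).2 (hd.integrable one_le_two)) hBp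
  have hq : 0 ≤ ∫ t in 0..T, ‖C (mildSol A B (u - ustar) 0 t)‖ ^ 2 + ‖K ((u - ustar) t)‖ ^ 2 :=
    intervalIntegral.integral_nonneg hT fun t _ => by positivity
  have hexpand := costJ_add A B C K z v hT x₀ hustar hd
  rw [add_sub_cancel, hcross] at hexpand
  linarith

end Optimality

section Riccati

variable (A : H →L[ℂ] H) (B : U →L[ℂ] H) (C : H →L[ℂ] Y)

/-- The terms `P B B* P x*` and `P B B* z_w` coming from the Riccati equation and the equation of
`z_w` cancel against the feedback in the equation of `x*`. -/
theorem hasDerivAt_costate {P : ℝ → H →L[ℂ] H} {zw xstar : ℝ → H} {T s : ℝ} (w : H)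
    (hP : HasDerivAt P (adjoint A ∘L P (T - s) + P (T - s) ∘L A -
      P (T - s) ∘L B ∘L adjoint B ∘L P (T - s) + adjoint C ∘L C) (T - s))
    (hzw : HasDerivAt zw ((adjoint A - P (T - s) ∘L B ∘L adjoint B) (zw (T - s))) (T - s))
    (hxstar : HasDerivAt xstar
      ((A - B ∘L adjoint B ∘L P (T - s)) (xstar s) - (B ∘L adjoint B) (zw (T - s))) s) :
    HasDerivAt (fun r => P (T - r) (xstar r) + zw (T - r) - w)
      (-adjoint A (P (T - s) (xstar s) + zw (T - s) - w) - (adjoint C (C (xstar s)) + adjoint A w))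
      s := by
  refine ((((hP.comp_const_sub T s).complexCLM_apply hxstar).add
    (hzw.comp_const_sub T s)).sub_const w).congr_deriv ?_
  simp only [neg_apply, add_apply, sub_apply, comp_apply, map_add, map_sub]
  abel

theorem costate_eq_integral {P : ℝ → H →L[ℂ] H} {zw xstar : ℝ → H} {T : ℝ} (w : H)
    (hP0 : P 0 = 0) (hzw0 : zw 0 = w)
    (hP' : ∀ t ∈ Icc 0 T, HasDerivAt P (adjoint A ∘L P t + P t ∘L A -
      P t ∘L B ∘L adjoint B ∘L P t + adjoint C ∘L C) t)
    (hzw : ∀ t ∈ Icc 0 T, HasDerivAt zw ((adjoint A - P t ∘L B ∘L adjoint B) (zw t)) t)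
    (hxstar : ∀ t ∈ Icc 0 T, HasDerivAt xstar
      ((A - B ∘L adjoint B ∘L P (T - t)) (xstar t) - (B ∘L adjoint B) (zw (T - t))) t)
    {s : ℝ} (hs : s ∈ Icc 0 T) :
    P (T - s) (xstar s) + zw (T - s) - w =
      ∫ t in s..T, exp ((t - s) • adjoint A) (adjoint C (C (xstar t)) + adjoint A w) := by
  have hsT : Icc s T ⊆ Icc 0 T := Icc_subset_Icc_left hs.1
  have hrev : ∀ r ∈ Icc s T, T - r ∈ Icc 0 T := fun r hr =>
    ⟨by linarith [hr.2], by linarith [hs.1, hr.1]⟩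
  have hx : ContinuousOn xstar (Icc s T) := (HasDerivAt.continuousOn hxstar).mono hsT
  refine eq_integral_exp_smul_apply_of_hasDerivAt (adjoint A)
    (p := fun r => P (T - r) (xstar r) + zw (T - r) - w) hs.2 (by fun_prop)
    (fun r hr => hasDerivAt_costate A B C w (hP' _ (hrev r hr)) (hzw _ (hrev r hr))
      (hxstar r (hsT hr))) (by simp [hP0, hzw0])

theorem continuousOn_feedback {P : ℝ → H →L[ℂ] H} {zw xstar : ℝ → H} {T : ℝ}
    (hP : ContinuousOn P (Icc 0 T)) (hzw : ContinuousOn zw (Icc 0 T))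
    (hxstar : ContinuousOn xstar (Icc 0 T)) :
    ContinuousOn (fun t => -adjoint B (P (T - t) (xstar t)) - adjoint B (zw (T - t)))
      (Icc 0 T) := by
  have hrev : MapsTo (fun t => T - t) (Icc 0 T) (Icc 0 T) := fun t ht =>
    ⟨by linarith [ht.2], by linarith [ht.1]⟩
  have hP_rev : ContinuousOn (fun t => P (T - t)) (Icc 0 T) :=
    hP.comp (continuous_sub_left T).continuousOn hrev
  have hzw_rev : ContinuousOn (fun t => zw (T - t)) (Icc 0 T) :=
    hzw.comp (continuous_sub_left T).continuousOn hrev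
  exact ((adjoint B).continuous.comp_continuousOn (hP_rev.clm_apply hxstar)).neg.sub
    ((adjoint B).continuous.comp_continuousOn hzw_rev)

end Riccati

/-- explicit solution of the generalized LQ problem: the feedback control
`u*(t) = −B* P(T−t) x*(t) − B* z_w(T−t)` (with `z_w` solving the adjoint closed-loop
equation starting from the adjoint steady state `w`) generates the mild solution `x*`
and is optimal for the cost `J_T`. -/
theorem optimal_control_feedback
    (A : H →L[ℂ] H) (B : U →L[ℂ] H) (C : H →L[ℂ] Y) (z : H) (v : U)
    (T : ℝ) (hT : 0 < T) (x₀ : H)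
    (P : ℝ → (H →L[ℂ] H)) (hP0 : P 0 = 0)
    (hP' : ∀ t ∈ Set.Icc (0:ℝ) T, HasDerivAt P
      ((adjoint A) ∘L (P t) + (P t) ∘L A - (P t) ∘L B ∘L (adjoint B) ∘L (P t) +
        (adjoint C) ∘L C) t)
    (w : H) (hw1 : adjoint A w = z) (hw2 : adjoint B w = v)
    (zw : ℝ → H) (hzw0 : zw 0 = w)
    (hzw : ∀ t ∈ Set.Icc (0:ℝ) T, HasDerivAt zw
      ((adjoint A - (P t) ∘L B ∘L (adjoint B)) (zw t)) t)
    (xstar : ℝ → H) (hxstar0 : xstar 0 = x₀)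
    (hxstar : ∀ t ∈ Set.Icc (0:ℝ) T, HasDerivAt xstar
      ((A - B ∘L (adjoint B) ∘L (P (T - t))) (xstar t) - (B ∘L (adjoint B)) (zw (T - t))) t)
    (ustar : ℝ → U)
    (hustar : ∀ t : ℝ, ustar t = -(adjoint B) (P (T - t) (xstar t)) - (adjoint B) (zw (T - t))) :
    (∀ t ∈ Set.Icc (0:ℝ) T, xstar t = mildSol A B ustar x₀ t) ∧
    (∀ u : ℝ → U, MemLp u 2 (volume.restrict (Set.Icc 0 T)) →
      (∫ t in (0:ℝ)..T,
        (‖C (mildSol A B ustar x₀ t)‖ ^ 2 + ‖ustar t‖ ^ 2 +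
          2 * (⟪z, mildSol A B ustar x₀ t⟫_ℂ).re + 2 * (⟪v, ustar t⟫_ℂ).re)) ≤
      (∫ t in (0:ℝ)..T,
        (‖C (mildSol A B u x₀ t)‖ ^ 2 + ‖u t‖ ^ 2 +
          2 * (⟪z, mildSol A B u x₀ t⟫_ℂ).re + 2 * (⟪v, u t⟫_ℂ).re))) := by
  have hustar_cont : ContinuousOn ustar (Icc 0 T) := funext hustar ▸ continuousOn_feedback B
    (HasDerivAt.continuousOn hP') (HasDerivAt.continuousOn hzw) (HasDerivAt.continuousOn hxstar)
  have hmild : ∀ t ∈ Icc 0 T, xstar t = mildSol A B ustar x₀ t := fun t ht =>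
    hxstar0 ▸ eq_mildSol_of_hasDerivAt A B ht.1 (hustar_cont.mono (Icc_subset_Icc_right ht.2))
      fun s hs => (hxstar s ⟨hs.1, hs.2.trans ht.2⟩).congr_deriv (by
        rw [hustar]; simp only [sub_apply, comp_apply, map_sub, map_neg]; abel)
  refine ⟨hmild, fun u hu => ?_⟩
  refine costJ_le_of_adjointState A B C (.id ℂ U) z v hT.le x₀ hustar_cont (fun s hs => ?_) hu
  have hcostate :
      ∫ t in s..T, exp ((t - s) • adjoint A) (adjoint C (C (mildSol A B ustar x₀ t)) + z) =
      P (T - s) (xstar s) + zw (T - s) - w := by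
    rw [costate_eq_integral A B C w hP0 hzw0 hP' hzw hxstar hs, hw1]
    refine intervalIntegral.integral_congr fun t ht => ?_
    rw [uIcc_of_le hs.2] at ht
    simp only [hmild t ⟨hs.1.trans ht.1, ht.2⟩]
  rw [hcostate]
  simp only [map_add, map_sub, hw2, hustar s, adjoint_id, id_apply]
  abel
end
end
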